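/- arXiv:math/0407498 — 4 statements merged into one kernel-verified Lean document; each statement's English description precedes it below -/
import Mathlib

section
/- Let λ be a regular uncountable cardinal and D a uniform ultrafilter on λ. Then the following are equivalent: (A) D is weakly reasonable; (B) for every increasing continuous sequence ⟨δ_ξ : ξ < λ⟩ of ordinals below λ there is a club C* of λ such that ∪{[δ_ξ, δ_{ξ+1}) : ξ ∈ C*} ∉ D; (C) for every club C of λ the quotient D/C does not extend the filter generated by the clubs of λ (i.e., some club of λ is not a member of D/C). -/
open Set Ordinal Cardinal

noncomputable section

namespace Sh830

/-- `D` is a (proper) ultrafilter on the set `Z` of ordinals. -/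
def IsUltraOn (Z : Set Ordinal) (D : Set (Set Ordinal)) : Prop :=
  (∀ A ∈ D, A ⊆ Z) ∧ Z ∈ D ∧ ∅ ∉ D ∧
  (∀ A B : Set Ordinal, A ∈ D → A ⊆ B → B ⊆ Z → B ∈ D) ∧
  (∀ A B : Set Ordinal, A ∈ D → B ∈ D → A ∩ B ∈ D) ∧
  (∀ A : Set Ordinal, A ⊆ Z → A ∈ D ∨ Z \ A ∈ D)

/-- `D` is an ultrafilter on `λ`, where `λ` is identified with the set of ordinals `< λ`. -/
def IsUltrafilterOn (l : Ordinal) (D : Set (Set Ordinal)) : Prop :=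
  IsUltraOn (Iio l) D

/-- `D` is uniform: every member of `D` has cardinality `λ`. -/
def IsUniformOn (l : Ordinal) (D : Set (Set Ordinal)) : Prop :=
  ∀ A ∈ D, #A = #(Iio l)

/-- `C` is a club (closed and unbounded) subset of `λ`. -/
def IsClubIn (C : Set Ordinal) (l : Ordinal) : Prop :=
  C ⊆ Iio l ∧
  (∀ δ, δ < l → δ ≠ 0 → sSup (C ∩ Iio δ) = δ → δ ∈ C) ∧
  (∀ α, α < l → ∃ β ∈ C, α < β)

/-- The quotient `D/f = {A ⊆ λ : f⁻¹(A) ∈ D}`. -/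
def quotUF (l : Ordinal) (D : Set (Set Ordinal)) (f : Ordinal → Ordinal) :
    Set (Set Ordinal) :=
  {A | A ⊆ Iio l ∧ Iio l ∩ f ⁻¹' A ∈ D}

/-- The family `F_λ` of all non-decreasing functions `λ → λ` with unbounded range. -/
def Flam (l : Ordinal) : Set (Ordinal → Ordinal) :=
  {f | (∀ α, α < l → f α < l) ∧ (∀ α β, α ≤ β → β < l → f α ≤ f β) ∧
    (∀ γ, γ < l → ∃ α, α < l ∧ γ ≤ f α)}

/-- `D` is weakly reasonable: for every `f ∈ F_λ` there is a club `C` of `λ` with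
`∪ {[δ, δ + f δ) : δ ∈ C} ∉ D`. -/
def WeaklyReasonable (l : Ordinal) (D : Set (Set Ordinal)) : Prop :=
  ∀ f ∈ Flam l, ∃ C, IsClubIn C l ∧ (⋃ δ ∈ C, Ico δ (δ + f δ)) ∉ D

/-- The order type of a set of ordinals: the (unique) ordinal order-isomorphic to it. -/
def setOtp (S : Set Ordinal) : Ordinal :=
  sInf {o : Ordinal | Nonempty (Iio o ≃o S)}

/-- `min(β/E)`: the least element of the `E`-equivalence class of `β`. -/
def minClass (E : Ordinal → Ordinal → Prop) (β : Ordinal) : Ordinal :=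
  sInf {γ | E γ β}

/-- The function `f_E` associated with an equivalence relation `E`:
`f_E α = otp {β < α : β = min(β/E) < min(α/E)}`. -/
def fEquiv (E : Ordinal → Ordinal → Prop) (α : Ordinal) : Ordinal :=
  setOtp {β | β < α ∧ β = minClass E β ∧ minClass E β < minClass E α}

/-- The equivalence relation `E_C` associated with a club `C`:
`α E_C β` iff `(∀ γ ∈ C)(α < γ ↔ β < γ)`. -/
def clubRel (C : Set Ordinal) (α β : Ordinal) : Prop :=
  ∀ γ ∈ C, (α < γ ↔ β < γ)

/-- The quotient `D/C = D/E_C = D/f_{E_C}`. -/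
def quotClub (l : Ordinal) (D : Set (Set Ordinal)) (C : Set Ordinal) :
    Set (Set Ordinal) :=
  quotUF l D (fEquiv (clubRel C))

/-- A strategy for Odd in the game `⅁_D`: given `i < λ`, Even's moves `β_j = α_{2j}`
for `j ≤ i`, and Odd's previous moves `γ_j = α_{2j+1}` for `j < i`, it produces
Odd's move `γ_i = α_{2i+1}`. -/
def OddStr : Type 1 :=
  (i : Ordinal) → ((j : Ordinal) → j ≤ i → Ordinal) → ((j : Ordinal) → j < i → Ordinal) → Ordinal

/-- A legal position of the game just before Odd's `i`-th move. -/
def IsPosition (l i : Ordinal) (β γ : Ordinal → Ordinal) : Prop :=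
  i < l ∧ (∀ j, j ≤ i → β j < l) ∧ (∀ j, j < i → β j < γ j ∧ γ j < l) ∧
  (∀ j, j < i → γ j < β (j + 1)) ∧
  (∀ j, j ≤ i → Order.IsSuccLimit j → β j = sSup (γ '' Iio j))

/-- A complete legal play of the game of length `λ`: `β i` is `α_{2i}`
(Even's move) and `γ i` is `α_{2i+1}` (Odd's move). -/
def IsPlay (l : Ordinal) (β γ : Ordinal → Ordinal) : Prop :=
  (∀ i, i < l → β i < l ∧ γ i < l) ∧ (∀ i, i < l → β i < γ i) ∧
  (∀ i, i + 1 < l → γ i < β (i + 1)) ∧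
  (∀ i, i < l → Order.IsSuccLimit i → β i = sSup (γ '' Iio i))

/-- `st` is a legal strategy for Odd: at every legal position it produces a legal move,
i.e. an ordinal `α_{2i+1}` with `α_{2i} < α_{2i+1} < λ`. -/
def IsOddStrategy (l : Ordinal) (st : OddStr) : Prop :=
  ∀ i β γ, IsPosition l i β γ →
    β i < st i (fun j _ => β j) (fun j _ => γ j) ∧
    st i (fun j _ => β j) (fun j _ => γ j) < l

/-- The play `(β, γ)` follows the strategy `st` of Odd. -/
def FollowsOdd (l : Ordinal) (st : OddStr) (β γ : Ordinal → Ordinal) : Prop :=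
  ∀ i, i < l → γ i = st i (fun j _ => β j) (fun j _ => γ j)

/-- `st` is winning for Odd in `⅁_D`: in every play following it, Even loses, i.e.
`∪ {[α_{2i+1}, α_{2i+2}) : i < λ} ∉ D`. -/
def OddWinsWith (l : Ordinal) (D : Set (Set Ordinal)) (st : OddStr) : Prop :=
  ∀ β γ, IsPlay l β γ → FollowsOdd l st β γ →
    (⋃ i ∈ Iio l, Ico (γ i) (β (i + 1))) ∉ D

/-- The next element of `C` above `δ`, i.e. `min (C \ (δ+1))`. -/
def nxt (C : Set Ordinal) (δ : Ordinal) : Ordinal := sInf (C ∩ Ioi δ)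

/-- A condition of the forcing notion `Q¹_λ`; here `Z^p_δ = [δ, nxt C δ)` and
`d δ` is the ultrafilter `d^p_δ` on `Z^p_δ`. -/
structure Q1 (l : Ordinal) where
  γ : Ordinal
  C : Set Ordinal
  d : Ordinal → Set (Set Ordinal)
  γ_lt : γ < l
  club : IsClubIn C l
  lim : ∀ δ ∈ C, Order.IsSuccLimit δ
  ultra : ∀ δ ∈ C, IsUltraOn (Ico δ (nxt C δ)) (d δ)

/-- The order of `Q¹_λ`. -/
def Q1le (l : Ordinal) (p q : Q1 l) : Prop :=
  p.γ ≤ q.γ ∧ p.C ∩ Iio p.γ ⊆ q.C ∧ q.C ⊆ p.C ∧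
  ∀ δ ∈ q.C, ∀ A ∈ q.d δ,
    ∃ ζ ∈ p.C ∩ Ico δ (nxt q.C δ), A ∩ Ico ζ (nxt p.C ζ) ∈ p.d ζ

/-- A condition of the forcing notion `Q⁰_λ`; here `Z^p_δ = [δ, nxt C δ)` and
`d δ` is the ultrafilter `d^p_δ` on `Z^p_δ`. -/
structure Q0 (l : Ordinal) where
  C : Set Ordinal
  d : Ordinal → Set (Set Ordinal)
  club : IsClubIn C l
  lim : ∀ δ ∈ C, Order.IsSuccLimit δ
  ultra : ∀ δ ∈ C, IsUltraOn (Ico δ (nxt C δ)) (d δ)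

/-- The order relation of `Q⁰_λ`, on the underlying data. -/
def Q0leAux (Cp : Set Ordinal) (dp : Ordinal → Set (Set Ordinal))
    (Cq : Set Ordinal) (dq : Ordinal → Set (Set Ordinal)) : Prop :=
  Cq ⊆ Cp ∧ ∀ δ ∈ Cq, ∀ A ∈ dq δ,
    ∃ ζ ∈ Cp ∩ Ico δ (nxt Cq δ), A ∩ Ico ζ (nxt Cp ζ) ∈ dp ζ

/-- The order `≤_{Q⁰_λ}`. -/
def Q0le (l : Ordinal) (p q : Q0 l) : Prop := Q0leAux p.C p.d q.C q.d

/-- The relation `≤*_{Q⁰_λ}`: for some `α < λ` the restrictions beyond `α` are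
`≤_{Q⁰_λ}`-related. -/
def Q0leStar (l : Ordinal) (p q : Q0 l) : Prop :=
  ∃ α, α < l ∧ Q0leAux (p.C \ Iio α) p.d (q.C \ Iio α) q.d

/-- `fil(p) = {A ⊆ λ : (∃ ε < λ)(∀ δ ∈ C^p \ ε)(A ∩ Z^p_δ ∈ d^p_δ)}`. -/
def fil (l : Ordinal) (p : Q0 l) : Set (Set Ordinal) :=
  {A | A ⊆ Iio l ∧ ∃ ε, ε < l ∧ ∀ δ ∈ p.C, ε ≤ δ → A ∩ Ico δ (nxt p.C δ) ∈ p.d δ}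

/-- `fil(G*) = ∪ {fil(p) : p ∈ G*}`. -/
def filG (l : Ordinal) (G : Set (Q0 l)) : Set (Set Ordinal) := ⋃ p ∈ G, fil l p

/-- The relation `≤⁰`: `p ≤⁰ q` iff `fil(p) ⊆ fil(q)`. -/
def le0 (l : Ordinal) (p q : Q0 l) : Prop := fil l p ⊆ fil l q

/-- `G` is `(<c)`-directed with respect to `le`: `G` is nonempty and every subset of `G`
of cardinality `< c` has an upper bound in `G`. -/
def DirLtOn (l : Ordinal) (c : Cardinal.{1}) (G : Set (Q0 l))
    (le : Q0 l → Q0 l → Prop) : Prop :=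
  G.Nonempty ∧ ∀ S : Set (Q0 l), S ⊆ G → #S < c → ∃ r ∈ G, ∀ p ∈ S, le p r

/-- The sum `⊕^e {d_x : x ∈ X}` of ultrafilters `d x` on `Z x` along an ultrafilter `e`
on `X`. -/
def ufSum (X : Set Ordinal) (e : Set (Set Ordinal)) (Z : Ordinal → Set Ordinal)
    (d : Ordinal → Set (Set Ordinal)) : Set (Set Ordinal) :=
  {A | A ⊆ (⋃ x ∈ X, Z x) ∧ {x | x ∈ X ∧ Z x ∩ A ∈ d x} ∈ e}

/-- The function `f_p` associated with `p ∈ Q⁰_λ`: `f_p α` is the member of `C^p` with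
`otp (C^p ∩ f_p α) = ω·α + ω`. -/
def fP (l : Ordinal) (p : Q0 l) (α : Ordinal) : Ordinal :=
  sInf {β | β ∈ p.C ∧ setOtp (p.C ∩ Iio β) = Ordinal.omega0 * α + Ordinal.omega0}

/-- The space `^λλ` (functions below `l` matter). -/
def funSp (l : Ordinal) : Set (Ordinal → Ordinal) := {f | ∀ α, α < l → f α < l}

/-- `F` is a dominating family in `^λλ`. -/
def IsDominating (l : Ordinal) (F : Set (Ordinal → Ordinal)) : Prop :=
  ∀ g ∈ funSp l, ∃ f ∈ F, ∃ α, α < l ∧ ∀ β, α < β → β < l → g β < f β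

/-- The dominating number `𝔡_λ`. -/
def dLam (l : Ordinal) : Cardinal.{1} :=
  sInf {c : Cardinal | ∃ F : Set (Ordinal → Ordinal),
    F ⊆ funSp l ∧ IsDominating l F ∧ #F = c}

/-- `S` is non-stationary in `λ`. -/
def NonStatIn (S : Set Ordinal) (l : Ordinal) : Prop :=
  ∃ C, IsClubIn C l ∧ S ∩ C = ∅

/-- `F` is a club-dominating family in `^λλ`. -/
def IsClubDominating (l : Ordinal) (F : Set (Ordinal → Ordinal)) : Prop :=
  ∀ g ∈ funSp l, ∃ f ∈ F, NonStatIn {β | β < l ∧ f β ≤ g β} l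

/-- The club-dominating number `𝔡_{cl(λ)}`. -/
def dClubLam (l : Ordinal) : Cardinal.{1} :=
  sInf {c : Cardinal | ∃ F : Set (Ordinal → Ordinal),
    F ⊆ funSp l ∧ IsClubDominating l F ∧ #F = c}

/-- `A` is a nowhere dense subset of the space `^λλ` (with basic open sets determined
by initial segments). -/
def IsNwd (l : Ordinal) (A : Set (Ordinal → Ordinal)) : Prop :=
  A ⊆ funSp l ∧
  ∀ s ∈ funSp l, ∀ α, α < l → ∃ t ∈ funSp l, ∃ α', α ≤ α' ∧ α' < l ∧
    (∀ β, β < α → t β = s β) ∧ ∀ f ∈ funSp l, (∀ β, β < α' → f β = t β) → f ∉ A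

/-- `A` belongs to the ideal `M^λ_{λ,λ}`, the `(<λ)`-complete ideal generated by the
nowhere dense subsets of `^λλ`. -/
def InMIdeal (l : Ordinal) (A : Set (Ordinal → Ordinal)) : Prop :=
  A ⊆ funSp l ∧ ∃ θ, θ < l ∧ ∃ B : Ordinal → Set (Ordinal → Ordinal),
    (∀ i, i < θ → IsNwd l (B i)) ∧ A ⊆ ⋃ i ∈ Iio θ, B i

/-- The covering number `cov(M^λ_{λ,λ})`. -/
def covM (l : Ordinal) : Cardinal.{1} :=
  sInf {c : Cardinal | ∃ S : Set (Set (Ordinal → Ordinal)),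
    (∀ A ∈ S, InMIdeal l A) ∧ funSp l ⊆ ⋃₀ S ∧ #S = c}

/-!
All three conditions say that `D` avoids a union of intervals indexed by a club.
For (A) ⇔ (B): a normal sequence `δ` gives the function `α ↦ δ (α + 1)`, and conversely a
function `f` gives the normal `δ` with `δ (ξ + 1) = δ ξ + f (δ ξ) + 1`, so that
`[δ ξ, δ ξ + f (δ ξ)) ⊆ [δ ξ, δ (ξ + 1))`; clubs are moved along `δ` by images and preimages, and
the preimage is unbounded because two clubs meet (this is where `cf λ > ω` enters).
For (B) ⇔ (C): the `E_C`-classes are the intervals `[e ξ, e (ξ + 1))`, where `e` is the normal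
enumeration of `{0} ∪ C`, and `f_{E_C}` sends that class to `ξ`; hence `X ∈ D/C` iff
`⋃ {[e ξ, e (ξ + 1)) : ξ ∈ X} ∈ D`. Every normal `δ` is such an `e` away from `0`, namely for
`C = δ '' [1, λ)`.
-/

open Order

lemma _root_.StrictMonoOn.eqOn_of_image_eq {α β : Type*} [LinearOrder α] [WellFoundedLT α]
    [Preorder β] {f g : α → β} {s : Set α} (hf : StrictMonoOn f s) (hg : StrictMonoOn g s)
    (h : f '' s = g '' s) : EqOn f g s := by
  have := (hf.domRestrict.range_inj hg.domRestrict).1 <| by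
    rwa [range_domRestrict, range_domRestrict]
  exact fun x hx => congrFun this ⟨x, hx⟩

lemma setOtp_image_Iio {e : Ordinal → Ordinal} (he : StrictMono e) (ξ : Ordinal) :
    setOtp (e '' Iio ξ) = ξ := by
  let iso : Iio ξ ≃o e '' Iio ξ := StrictMonoOn.orderIso e _ (he.strictMonoOn _)
  have key : ∀ o, Nonempty (Iio o ≃o e '' Iio ξ) ↔ o = ξ := fun o =>
    ⟨fun ⟨g⟩ => by simpa using (g.trans iso.symm).ordinalType_congr, by rintro rfl; exact ⟨iso⟩⟩
  simp only [setOtp, key, ofPred_eq_eq_singleton, csInf_singleton]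

lemma iSup_eq_of_interleave {a b : ℕ → Ordinal} (hab : ∀ n, a n ≤ b n)
    (hba : ∀ n, b n ≤ a (n + 1)) : ⨆ n, b n = ⨆ n, a n :=
  le_antisymm (Ordinal.iSup_le fun n => (hba n).trans (Ordinal.le_iSup a (n + 1)))
    (Ordinal.iSup_le fun n => (hab n).trans (Ordinal.le_iSup b n))

section RegularCardinal

variable {κ : Cardinal} (hreg : κ.IsRegular)
include hreg

lemma sSup_image_Iio_lt_ord {ξ : Ordinal} (hξ : ξ < κ.ord) {g : Ordinal → Ordinal}
    (hg : ∀ i, i < ξ → g i < κ.ord) : sSup (g '' Iio ξ) < κ.ord := by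
  rw [sSup_image']
  refine Ordinal.lift_iSup_lt_of_lt_cof ?_ fun i => hg i i.2
  simpa [← lift_ord, ← lift_cof, ← lift_card, hreg.cof_ord] using lt_ord.1 hξ

lemma iSup_nat_lt_ord (hunc : ℵ₀ < κ) {a : ℕ → Ordinal} (ha : ∀ n, a n < κ.ord) :
    ⨆ n, a n < κ.ord :=
  Ordinal.lift_iSup_lt_of_lt_cof (by simpa [hreg.cof_ord] using hunc) ha

end RegularCardinal

section Clubs

variable {l δ : Ordinal} {C S : Set Ordinal}

lemma exists_mem_between_of_sSup_inter_Iio_eq (h : sSup (S ∩ Iio δ) = δ) {γ : Ordinal}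
    (hγ : γ < δ) : ∃ x ∈ S, γ < x ∧ x < δ := by
  obtain ⟨x, ⟨hxS, hxδ⟩, hγx⟩ := exists_lt_of_lt_csSup' (hγ.trans_eq h.symm)
  exact ⟨x, hxS, hγx, hxδ⟩

lemma sSup_inter_Iio_eq_of_subset {T : Set Ordinal} (hST : S ⊆ T) (h : sSup (S ∩ Iio δ) = δ) :
    sSup (T ∩ Iio δ) = δ :=
  le_antisymm (csSup_le' fun _ hx => hx.2.le) <| h.symm.le.trans <|
    csSup_le_csSup' (bddAbove_Iio.mono inter_subset_right) (inter_subset_inter_left _ hST)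

lemma IsClubIn.sSup_mem (hC : IsClubIn C l) (hS : S ⊆ C) (hne : S.Nonempty)
    (hSl : sSup S < l) : sSup S ∈ C := by
  have hbdd : BddAbove S := bddAbove_Iio.mono (hS.trans hC.1)
  by_cases hmem : sSup S ∈ S
  · exact hS hmem
  have hlim : IsSuccLimit (sSup S) := by
    by_contra h
    exact hmem (csSup_mem_of_not_isSuccLimit hne hbdd h)
  have hlt : ∀ x ∈ S, x < sSup S := fun x hx =>
    (le_csSup hbdd hx).lt_of_ne fun h => hmem (h ▸ hx)
  refine hC.2.1 _ hSl hlim.bot_lt.ne' (le_antisymm (csSup_le' fun _ hx => hx.2.le) ?_)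
  exact csSup_le_csSup' (bddAbove_Iio.mono inter_subset_right) fun x hx => ⟨hS hx, hlt x hx⟩

lemma IsClubIn.sdiff_Iio (hC : IsClubIn C l) {b : Ordinal} (hb : b < l) :
    IsClubIn (C \ Iio b) l := by
  refine ⟨sdiff_subset.trans hC.1, fun δ hδ hδ0 hsup => ?_, fun α hα => ?_⟩
  · obtain ⟨x, ⟨-, hbx⟩, -, hxδ⟩ :=
      exists_mem_between_of_sSup_inter_Iio_eq hsup (pos_iff_ne_zero.2 hδ0)
    exact ⟨hC.2.1 δ hδ hδ0 (sSup_inter_Iio_eq_of_subset sdiff_subset hsup),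
      fun hδb => hbx (hxδ.trans hδb)⟩
  · obtain ⟨β, hβC, hβ⟩ := hC.2.2 (max α b) (max_lt hα hb)
    exact ⟨β, ⟨hβC, not_lt.2 ((le_max_right α b).trans hβ.le)⟩, (le_max_left α b).trans_lt hβ⟩

lemma isClubIn_Iio (hl : IsSuccLimit l) : IsClubIn (Iio l) l :=
  ⟨subset_rfl, fun _ hδ _ _ => hδ, fun α hα => ⟨α + 1, hl.add_one_lt hα, lt_add_one α⟩⟩

lemma IsClubIn.insert_zero (hC : IsClubIn C l) (hl : 0 < l) : IsClubIn (insert 0 C) l := by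
  refine ⟨insert_subset hl hC.1, fun δ hδ hδ0 hsup => mem_insert_of_mem 0 ?_,
    fun α hα => (hC.2.2 α hα).imp fun β hβ => ⟨mem_insert_of_mem 0 hβ.1, hβ.2⟩⟩
  refine hC.2.1 δ hδ hδ0 (le_antisymm (csSup_le' fun _ hx => hx.2.le) (hsup.symm.le.trans ?_))
  refine csSup_le' fun x ⟨hx, hxδ⟩ => ?_
  rcases hx with rfl | hxC
  · exact zero_le
  · exact le_csSup (bddAbove_Iio.mono inter_subset_right) ⟨hxC, hxδ⟩

lemma IsClubIn.nxt_mem (hC : IsClubIn C l) {x : Ordinal} (hx : x < l) :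
    nxt C x ∈ C ∧ x < nxt C x :=
  csInf_mem (hC.2.2 x hx)

lemma IsClubIn.inter {κ : Cardinal} (hreg : κ.IsRegular) (hunc : ℵ₀ < κ) {C₁ C₂ : Set Ordinal}
    (h₁ : IsClubIn C₁ κ.ord) (h₂ : IsClubIn C₂ κ.ord) : IsClubIn (C₁ ∩ C₂) κ.ord := by
  refine ⟨inter_subset_left.trans h₁.1, fun δ hδ hδ0 hsup =>
    ⟨h₁.2.1 δ hδ hδ0 (sSup_inter_Iio_eq_of_subset inter_subset_left hsup),
      h₂.2.1 δ hδ hδ0 (sSup_inter_Iio_eq_of_subset inter_subset_right hsup)⟩, fun α hα => ?_⟩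
  -- alternate `ω` times between the two clubs; the supremum lies in both
  let a : ℕ → Ordinal := fun n => (fun x => nxt C₂ (nxt C₁ x))^[n] α
  have ha_succ (n : ℕ) : a (n + 1) = nxt C₂ (nxt C₁ (a n)) := Function.iterate_succ_apply' ..
  have ha (n : ℕ) : a n < κ.ord := by
    induction n with
    | zero => exact hα
    | succ n ih => exact ha_succ n ▸ h₂.1 (h₂.nxt_mem (h₁.1 (h₁.nxt_mem ih).1)).1
  have hb (n : ℕ) := h₁.nxt_mem (ha n)
  have hc (n : ℕ) : a (n + 1) ∈ C₂ ∧ nxt C₁ (a n) < a (n + 1) :=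
    ha_succ n ▸ h₂.nxt_mem (h₁.1 (hb n).1)
  have hsup₁ := iSup_eq_of_interleave (fun n => (hb n).2.le) fun n => (hc n).2.le
  have hsup₂ := iSup_eq_of_interleave (b := fun n => a (n + 1))
    (fun n => ((hb n).2.trans (hc n).2).le) fun _ => le_rfl
  have hβ : ⨆ n, a n < κ.ord := iSup_nat_lt_ord hreg hunc ha
  refine ⟨⨆ n, a n, ⟨?_, ?_⟩, ((hb 0).2.trans (hc 0).2).trans_le (Ordinal.le_iSup a 1)⟩
  · rw [← hsup₁]
    exact h₁.sSup_mem (range_subset_iff.2 fun n => (hb n).1) (range_nonempty _)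
      (hsup₁.trans_lt hβ)
  · rw [← hsup₂]
    exact h₂.sSup_mem (range_subset_iff.2 fun n => (hc n).1) (range_nonempty _)
      (hsup₂.trans_lt hβ)

end Clubs

structure IsNormalBelow (l : Ordinal) (δ : Ordinal → Ordinal) : Prop where
  mapsTo : MapsTo δ (Iio l) (Iio l)
  strictMonoOn : StrictMonoOn δ (Iio l)
  eq_sSup : ∀ ξ, ξ < l → IsSuccLimit ξ → δ ξ = sSup (δ '' Iio ξ)

section NormalBelow

variable {l : Ordinal} {δ : Ordinal → Ordinal}

lemma isNormalBelow_iff : IsNormalBelow l δ ↔ (∀ ξ, ξ < l → δ ξ < l) ∧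
    (∀ ξ ζ, ξ < ζ → ζ < l → δ ξ < δ ζ) ∧
    (∀ ξ, ξ < l → IsSuccLimit ξ → δ ξ = sSup (δ '' Iio ξ)) :=
  ⟨fun h => ⟨fun _ hξ => h.mapsTo hξ, fun _ _ hξζ hζ => h.strictMonoOn (hξζ.trans hζ) hζ hξζ,
    h.eq_sSup⟩, fun ⟨h₁, h₂, h₃⟩ => ⟨h₁, fun _ _ _ hζ h => h₂ _ _ h hζ, h₃⟩⟩

lemma _root_.Order.IsNormal.isNormalBelow (hδ : Order.IsNormal δ)
    (h : MapsTo δ (Iio l) (Iio l)) : IsNormalBelow l δ :=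
  ⟨h, hδ.strictMono.strictMonoOn _, fun _ _ hξ =>
    ((hδ.isLUB_image_Iio_of_isSuccLimit hξ).csSup_eq ⟨δ 0, 0, hξ.bot_lt, rfl⟩).symm⟩

namespace IsNormalBelow

variable (hδ : IsNormalBelow l δ)
include hδ

lemma le_apply {ξ : Ordinal} (hξ : ξ < l) : ξ ≤ δ ξ := by
  induction ξ using WellFoundedLT.induction with
  | _ ξ ih =>
    by_contra! hlt
    exact (ih _ hlt (hlt.trans hξ)).not_gt (hδ.strictMonoOn (hlt.trans hξ) hξ hlt)

lemma map_sSup {S : Set Ordinal} (hne : S.Nonempty) (hbdd : BddAbove S) (hSl : sSup S < l) :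
    δ (sSup S) = sSup (δ '' S) := by
  have hS : ∀ x ∈ S, x < l := fun x hx => (le_csSup hbdd hx).trans_lt hSl
  have hub : δ (sSup S) ∈ upperBounds (δ '' S) := by
    rintro _ ⟨x, hx, rfl⟩
    exact hδ.strictMonoOn.monotoneOn (hS x hx) hSl (le_csSup hbdd hx)
  refine le_antisymm ?_ (csSup_le' hub)
  by_cases hmem : sSup S ∈ S
  · exact le_csSup ⟨_, hub⟩ (mem_image_of_mem δ hmem)
  have hlim : IsSuccLimit (sSup S) := by
    by_contra h
    exact hmem (csSup_mem_of_not_isSuccLimit hne hbdd h)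
  rw [hδ.eq_sSup _ hSl hlim]
  refine csSup_le' ?_
  rintro _ ⟨ξ, hξ, rfl⟩
  obtain ⟨x, hxS, hξx⟩ := exists_lt_of_lt_csSup hne hξ
  exact (hδ.strictMonoOn.monotoneOn (hξ.trans hSl) (hS x hxS) hξx.le).trans
    (le_csSup ⟨_, hub⟩ (mem_image_of_mem δ hxS))

lemma isClubIn_image {C : Set Ordinal} (hC : IsClubIn C l) : IsClubIn (δ '' C) l := by
  refine ⟨(image_mono hC.1).trans hδ.mapsTo.image_subset, fun η hη hη0 hsup => ?_,
    fun α hα => ?_⟩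
  · set T := C ∩ δ ⁻¹' Iio η
    have hTη : ∀ ξ ∈ T, ξ < η := fun ξ hξ => (hδ.le_apply (hC.1 hξ.1)).trans_lt hξ.2
    obtain ⟨_, ⟨ξ, hξ, rfl⟩, -, hξη⟩ :=
      exists_mem_between_of_sSup_inter_Iio_eq hsup (pos_iff_ne_zero.2 hη0)
    have hne : T.Nonempty := ⟨ξ, hξ, hξη⟩
    have hTl : sSup T < l := (csSup_le hne fun ξ hξ => (hTη ξ hξ).le).trans_lt hη
    refine ⟨sSup T, hC.sSup_mem inter_subset_left hne hTl, ?_⟩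
    rw [hδ.map_sSup hne ⟨η, fun ξ hξ => (hTη ξ hξ).le⟩ hTl, image_inter_preimage, hsup]
  · obtain ⟨ξ, hξC, hαξ⟩ := hC.2.2 α hα
    exact ⟨δ ξ, mem_image_of_mem δ hξC, hαξ.trans_le (hδ.le_apply (hC.1 hξC))⟩

end IsNormalBelow

lemma IsNormalBelow.isClubIn_preimage {κ : Cardinal} (hreg : κ.IsRegular) (hunc : ℵ₀ < κ)
    (hδ : IsNormalBelow κ.ord δ) {C : Set Ordinal} (hC : IsClubIn C κ.ord) :
    IsClubIn (Iio κ.ord ∩ δ ⁻¹' C) κ.ord := by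
  refine ⟨inter_subset_left, fun η hη hη0 hsup => ⟨hη, ?_⟩, fun α hα => ?_⟩
  · set P := Iio κ.ord ∩ δ ⁻¹' C ∩ Iio η
    obtain ⟨x, hx, -, hxη⟩ :=
      exists_mem_between_of_sSup_inter_Iio_eq hsup (pos_iff_ne_zero.2 hη0)
    have hne : P.Nonempty := ⟨x, hx, hxη⟩
    have key : δ η = sSup (δ '' P) := by
      rw [← hδ.map_sSup hne (bddAbove_Iio.mono inter_subset_right) (hsup.trans_lt hη), hsup]
    show δ η ∈ C
    rw [key]
    exact hC.sSup_mem (image_subset_iff.2 fun ξ hξ => hξ.1.2) (hne.image δ)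
      (key ▸ hδ.mapsTo hη)
  · have hl := isSuccLimit_ord hreg.aleph0_le
    obtain ⟨_, ⟨hC', ξ, hξ, rfl⟩, hαξ⟩ :=
      (hC.inter hreg hunc (hδ.isClubIn_image (isClubIn_Iio hl))).2.2 (δ α) (hδ.mapsTo hα)
    exact ⟨ξ, ⟨hξ, hC'⟩, (hδ.strictMonoOn.lt_iff_lt hα hξ).1 hαξ⟩

end NormalBelow

section TransfiniteIter

universe u

def transfiniteIter (s : Ordinal.{u} → Ordinal.{u}) (ξ : Ordinal.{u}) : Ordinal.{u} :=
  limitRecOn ξ 0 (fun _ x => s x) fun ζ _ ih => ⨆ c : Iio ζ, ih c c.2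

variable {s : Ordinal → Ordinal}

lemma transfiniteIter_zero : transfiniteIter s 0 = 0 :=
  limitRecOn_zero ..

lemma transfiniteIter_add_one (ξ : Ordinal) :
    transfiniteIter s (ξ + 1) = s (transfiniteIter s ξ) :=
  limitRecOn_add_one ..

lemma transfiniteIter_of_isSuccLimit {ξ : Ordinal} (hξ : IsSuccLimit ξ) :
    transfiniteIter s ξ = sSup (transfiniteIter s '' Iio ξ) := by
  rw [transfiniteIter, limitRecOn_limit _ _ _ _ hξ, sSup_image']
  rfl

lemma isNormal_transfiniteIter (hs : ∀ x, x < s x) : Order.IsNormal (transfiniteIter s) := by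
  refine .of_succ_lt (fun ξ => ?_) fun hξ => ?_
  · rw [succ_eq_add_one, transfiniteIter_add_one]
    exact hs _
  · rw [transfiniteIter_of_isSuccLimit hξ]
    exact isLUB_csSup ⟨_, mem_image_of_mem _ (show 0 ∈ Iio _ from hξ.bot_lt)⟩
      Ordinal.bddAbove_of_small

lemma mapsTo_transfiniteIter {κ : Cardinal} (hreg : κ.IsRegular)
    (hs : MapsTo s (Iio κ.ord) (Iio κ.ord)) :
    MapsTo (transfiniteIter s) (Iio κ.ord) (Iio κ.ord) := by
  intro ξ hξ
  induction ξ using limitRecOn with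
  | zero =>
    rw [mem_Iio, transfiniteIter_zero]
    exact ord_pos.2 hreg.pos
  | add_one ξ ih =>
    rw [transfiniteIter_add_one]
    exact hs (ih ((lt_add_one ξ).trans hξ))
  | limit ξ hlim ih =>
    rw [transfiniteIter_of_isSuccLimit hlim]
    exact sSup_image_Iio_lt_ord hreg hξ fun c hc => ih c hc (hc.trans hξ)

end TransfiniteIter

/-- Enumerates `{0} ∪ C`, the set of least elements of the classes of `E_C`; the ordinals `≥ l`
are added only to make the enumerated set unbounded. -/
def clubEnum (C : Set Ordinal) (l : Ordinal) : Ordinal → Ordinal :=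
  enumOrd (insert 0 C ∪ Ici l)

section ClubEnum

variable {C : Set Ordinal} {l : Ordinal}

lemma not_bddAbove_insert_zero_union_Ici : ¬ BddAbove (insert 0 C ∪ Ici l) :=
  not_bddAbove_iff.2 fun x => ⟨max l (x + 1), Or.inr (mem_Ici.2 (le_max_left _ _)),
    (lt_add_one x).trans_le (le_max_right _ _)⟩

lemma clubEnum_zero : clubEnum C l 0 = 0 := by
  rw [clubEnum, enumOrd_zero]
  exact nonpos_iff_eq_zero.1 (csInf_le' (mem_union_left _ (mem_insert _ _)))

lemma isNormal_clubEnum (hC : IsClubIn C l) : Order.IsNormal (clubEnum C l) := by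
  refine isNormal_enumOrd (fun t ht hne hbdd => ?_) not_bddAbove_insert_zero_union_Ici
  by_cases hlt : sSup t < l
  · have htC : t ⊆ insert 0 C := fun x hx =>
      (ht hx).resolve_right fun hlx => ((le_csSup hbdd hx).trans_lt hlt).not_ge hlx
    exact Or.inl ((hC.insert_zero (zero_le.trans_lt hlt)).sSup_mem htC hne hlt)
  · exact Or.inr (not_lt.1 hlt)

lemma exists_clubEnum_le_lt_add_one (hC : IsClubIn C l) {α : Ordinal} (hα : α < l) :
    ∃ ξ < l, clubEnum C l ξ ≤ α ∧ α < clubEnum C l (ξ + 1) := by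
  have he := isNormal_clubEnum hC
  obtain ⟨ξ, h₁, h₂⟩ := he.exists_map_le_lt_map_succ (x := α) <| by
    rw [bot_eq_zero, clubEnum_zero]
    exact zero_le
  exact ⟨ξ, (he.strictMono.le_apply.trans h₁).trans_lt hα, h₁, by rwa [← succ_eq_add_one]⟩

lemma clubEnum_le_or_add_one_le {c : Ordinal} (hc : c ∈ C) (ξ : Ordinal) :
    c ≤ clubEnum C l ξ ∨ clubEnum C l (ξ + 1) ≤ c := by
  have hs := not_bddAbove_insert_zero_union_Ici (C := C) (l := l)
  obtain ⟨ζ, rfl⟩ := enumOrd_surjective hs (Or.inl (mem_insert_of_mem 0 hc))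
  have hmono := (enumOrd_strictMono hs).monotone
  rcases le_or_gt ζ ξ with h | h
  · exact Or.inl (hmono h)
  · exact Or.inr (hmono (add_one_le_of_lt h))

variable {κ : Cardinal} (hreg : κ.IsRegular) (hC : IsClubIn C κ.ord)
include hreg hC

lemma clubEnum_lt {ξ : Ordinal} (hξ : ξ < κ.ord) : clubEnum C κ.ord ξ < κ.ord := by
  induction ξ using WellFoundedLT.induction with
  | _ ξ ih =>
    obtain ⟨x, hxC, hx⟩ :=
      hC.2.2 _ (sSup_image_Iio_lt_ord hreg hξ fun c hc => ih c hc (hc.trans hξ))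
    refine (enumOrd_le_of_forall_lt (Or.inl (mem_insert_of_mem _ hxC)) fun b hb => ?_).trans_lt
      (hC.1 hxC)
    exact (le_csSup Ordinal.bddAbove_of_small
      (mem_image_of_mem _ (show b ∈ Iio ξ from hb))).trans_lt hx

lemma isNormalBelow_clubEnum : IsNormalBelow κ.ord (clubEnum C κ.ord) :=
  (isNormal_clubEnum hC).isNormalBelow fun _ hξ => clubEnum_lt hreg hC hξ

lemma image_clubEnum_Iio : clubEnum C κ.ord '' Iio κ.ord = insert 0 C := by
  ext x
  constructor
  · rintro ⟨ξ, hξ, rfl⟩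
    exact (enumOrd_mem not_bddAbove_insert_zero_union_Ici ξ).resolve_right
      (clubEnum_lt hreg hC hξ).not_ge
  · intro hx
    obtain ⟨ξ, rfl⟩ :=
      enumOrd_surjective (not_bddAbove_insert_zero_union_Ici (l := κ.ord)) (Or.inl hx)
    have hxl : enumOrd (insert 0 C ∪ Ici κ.ord) ξ < κ.ord := by
      rcases hx with h | h
      · rw [h]
        exact ord_pos.2 hreg.pos
      · exact hC.1 h
    exact ⟨ξ, (le_enumOrd_self not_bddAbove_insert_zero_union_Ici).trans_lt hxl, rfl⟩

lemma clubEnum_mem {ξ : Ordinal} (hξ : ξ < κ.ord) (hξ0 : ξ ≠ 0) : clubEnum C κ.ord ξ ∈ C := by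
  refine ((image_clubEnum_Iio hreg hC).subset (mem_image_of_mem _ hξ)).resolve_left fun h => ?_
  have := (isNormal_clubEnum hC).strictMono (pos_iff_ne_zero.2 hξ0)
  rw [clubEnum_zero, ← h] at this
  exact this.false

lemma image_clubEnum_Iio_sdiff_Iio_one (h0 : 0 ∉ C) :
    clubEnum C κ.ord '' (Iio κ.ord \ Iio 1) = C := by
  refine subset_antisymm (image_subset_iff.2 fun ξ ⟨hξ, hξ1⟩ =>
    clubEnum_mem hreg hC hξ fun h => hξ1 (mem_Iio.2 (h ▸ zero_lt_one))) fun c hc => ?_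
  obtain ⟨ξ, hξ, rfl⟩ := (image_clubEnum_Iio hreg hC).symm.subset (mem_insert_of_mem 0 hc)
  refine ⟨ξ, ⟨hξ, fun hξ1 => h0 ?_⟩, rfl⟩
  rwa [lt_one_iff.1 (mem_Iio.1 hξ1), clubEnum_zero] at hc

section Class

variable {α ξ : Ordinal} (hξ : ξ < κ.ord) (h₁ : clubEnum C κ.ord ξ ≤ α)
  (h₂ : α < clubEnum C κ.ord (ξ + 1))
include hξ h₁ h₂

lemma clubRel_iff_mem_Ico {γ : Ordinal} :
    clubRel C γ α ↔ γ ∈ Ico (clubEnum C κ.ord ξ) (clubEnum C κ.ord (ξ + 1)) := by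
  have hl := isSuccLimit_ord hreg.aleph0_le
  refine ⟨fun hγ => ⟨not_lt.1 fun hlt => ?_, (hγ _ ?_).2 h₂⟩, fun ⟨hγ₁, hγ₂⟩ c hc => ?_⟩
  · have hξ0 : ξ ≠ 0 := by
      rintro rfl
      rw [clubEnum_zero] at hlt
      exact not_lt_zero hlt
    exact h₁.not_gt ((hγ _ (clubEnum_mem hreg hC hξ hξ0)).1 hlt)
  · exact clubEnum_mem hreg hC (hl.add_one_lt hξ) (zero_le.trans_lt (lt_add_one ξ)).ne'
  · rcases clubEnum_le_or_add_one_le hc ξ with h | h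
    · exact iff_of_false (h.trans hγ₁).not_gt (h.trans h₁).not_gt
    · exact iff_of_true (hγ₂.trans_le h) (h₂.trans_le h)

lemma minClass_clubRel : minClass (clubRel C) α = clubEnum C κ.ord ξ := by
  have : {γ | clubRel C γ α} = Ico (clubEnum C κ.ord ξ) (clubEnum C κ.ord (ξ + 1)) :=
    ext fun _ => clubRel_iff_mem_Ico hreg hC hξ h₁ h₂
  rw [minClass, this, csInf_Ico (h₁.trans_lt h₂)]

lemma fEquiv_clubRel : fEquiv (clubRel C) α = ξ := by
  have he := (isNormal_clubEnum hC).strictMono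
  have hα : α < κ.ord :=
    h₂.trans (clubEnum_lt hreg hC ((isSuccLimit_ord hreg.aleph0_le).add_one_lt hξ))
  suffices {β | β < α ∧ β = minClass (clubRel C) β ∧
      minClass (clubRel C) β < minClass (clubRel C) α} = clubEnum C κ.ord '' Iio ξ by
    rw [fEquiv, this, setOtp_image_Iio he]
  rw [minClass_clubRel hreg hC hξ h₁ h₂]
  ext β
  constructor
  · rintro ⟨hβα, hβ, hlt⟩
    obtain ⟨ζ, hζ, g₁, g₂⟩ := exists_clubEnum_le_lt_add_one hC (hβα.trans hα)
    rw [minClass_clubRel hreg hC hζ g₁ g₂] at hβ hlt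
    exact ⟨ζ, he.lt_iff_lt.1 hlt, hβ.symm⟩
  · rintro ⟨ζ, hζξ, rfl⟩
    have hmin := minClass_clubRel hreg hC (hζξ.trans hξ) le_rfl (he (lt_add_one ζ))
    refine ⟨(he hζξ).trans_le h₁, hmin.symm, ?_⟩
    rw [hmin]
    exact he hζξ

end Class

lemma inter_preimage_fEquiv_clubRel {X : Set Ordinal} (hX : X ⊆ Iio κ.ord) :
    Iio κ.ord ∩ fEquiv (clubRel C) ⁻¹' X =
      ⋃ ζ ∈ X, Ico (clubEnum C κ.ord ζ) (clubEnum C κ.ord (ζ + 1)) := by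
  have hl := isSuccLimit_ord hreg.aleph0_le
  ext α
  simp only [mem_inter_iff, mem_preimage, mem_iUnion, mem_Iio, exists_prop]
  constructor
  · rintro ⟨hα, hmem⟩
    obtain ⟨ξ, hξ, h₁, h₂⟩ := exists_clubEnum_le_lt_add_one hC hα
    exact ⟨ξ, fEquiv_clubRel hreg hC hξ h₁ h₂ ▸ hmem, h₁, h₂⟩
  · rintro ⟨ζ, hζ, h₁, h₂⟩
    exact ⟨h₂.trans (clubEnum_lt hreg hC (hl.add_one_lt (hX hζ))),
      (fEquiv_clubRel hreg hC (hX hζ) h₁ h₂).symm ▸ hζ⟩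

lemma mem_quotClub_iff {D : Set (Set Ordinal)} {X : Set Ordinal} :
    X ∈ quotClub κ.ord D C ↔
      X ⊆ Iio κ.ord ∧ (⋃ ζ ∈ X, Ico (clubEnum C κ.ord ζ) (clubEnum C κ.ord (ζ + 1))) ∈ D :=
  and_congr_right fun hX => by rw [inter_preimage_fEquiv_clubRel hreg hC hX]

end ClubEnum

lemma IsUltrafilterOn.notMem_of_subset {l : Ordinal} {D : Set (Set Ordinal)}
    (hD : IsUltrafilterOn l D) {A B : Set Ordinal} (hAB : A ⊆ B) (hBl : B ⊆ Iio l)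
    (hB : B ∉ D) : A ∉ D :=
  fun hA => hB (hD.2.2.2.1 A B hA hAB hBl)

section Equivalences

variable {κ : Cardinal} (hreg : κ.IsRegular) {D : Set (Set Ordinal)} (hD : IsUltrafilterOn κ.ord D)
include hreg hD

lemma exists_club_biUnion_Ico_notMem_of_weaklyReasonable (hunc : ℵ₀ < κ)
    (hwr : WeaklyReasonable κ.ord D) {δ : Ordinal → Ordinal} (hδ : IsNormalBelow κ.ord δ) :
    ∃ C', IsClubIn C' κ.ord ∧ (⋃ ξ ∈ C', Ico (δ ξ) (δ (ξ + 1))) ∉ D := by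
  have hl := isSuccLimit_ord hreg.aleph0_le
  have hmono := hδ.strictMonoOn.monotoneOn
  obtain ⟨C, hC, hnot⟩ := hwr (fun α => δ (α + 1))
    ⟨fun α hα => hδ.mapsTo (hl.add_one_lt hα),
      fun α β hαβ hβ => hmono (hl.add_one_lt (hαβ.trans_lt hβ)) (hl.add_one_lt hβ)
        (add_le_add_left hαβ 1),
      fun γ hγ => ⟨γ, hγ, (lt_add_one γ).le.trans (hδ.le_apply (hl.add_one_lt hγ))⟩⟩
  refine ⟨Iio κ.ord ∩ δ ⁻¹' C, hδ.isClubIn_preimage hreg hunc hC, hD.notMem_of_subset ?_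
    (iUnion₂_subset fun α hα x hx => hx.2.trans (isPrincipal_add_ord hreg.aleph0_le (hC.1 hα)
      (hδ.mapsTo (hl.add_one_lt (hC.1 hα))))) hnot⟩
  refine iUnion₂_mono' fun ξ ⟨hξ, hξC⟩ => ⟨δ ξ, hξC, Ico_subset_Ico_right ?_⟩
  calc δ (ξ + 1) ≤ δ (δ ξ + 1) := hmono (hl.add_one_lt hξ) (hl.add_one_lt (hδ.mapsTo hξ))
        (add_le_add_left (hδ.le_apply hξ) 1)
    _ ≤ δ ξ + δ (δ ξ + 1) := le_add_self

lemma weaklyReasonable_of_exists_club_biUnion_Ico_notMem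
    (hB : ∀ δ, IsNormalBelow κ.ord δ →
      ∃ C', IsClubIn C' κ.ord ∧ (⋃ ξ ∈ C', Ico (δ ξ) (δ (ξ + 1))) ∉ D) :
    WeaklyReasonable κ.ord D := by
  intro f hf
  have hl := isSuccLimit_ord hreg.aleph0_le
  set δ := transfiniteIter fun x => x + f x + 1
  have hδ : IsNormalBelow κ.ord δ :=
    (isNormal_transfiniteIter fun x => le_self_add.trans_lt (lt_add_one _)).isNormalBelow
      (mapsTo_transfiniteIter hreg fun x hx =>
        hl.add_one_lt (isPrincipal_add_ord hreg.aleph0_le hx (hf.1 x hx)))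
  obtain ⟨C', hC', hnot⟩ := hB δ hδ
  refine ⟨δ '' C', hδ.isClubIn_image hC', hD.notMem_of_subset ?_
    (iUnion₂_subset fun ξ hξ x hx => hx.2.trans (hδ.mapsTo (hl.add_one_lt (hC'.1 hξ)))) hnot⟩
  rw [biUnion_image]
  refine iUnion₂_mono fun ξ _ => Ico_subset_Ico_right ?_
  rw [show δ (ξ + 1) = δ ξ + f (δ ξ) + 1 from transfiniteIter_add_one ξ]
  exact (lt_add_one _).le

omit hD in
lemma exists_club_notMem_quotClub_of_exists_club_biUnion_Ico_notMem
    (hB : ∀ δ, IsNormalBelow κ.ord δ →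
      ∃ C', IsClubIn C' κ.ord ∧ (⋃ ξ ∈ C', Ico (δ ξ) (δ (ξ + 1))) ∉ D)
    {C : Set Ordinal} (hC : IsClubIn C κ.ord) :
    ∃ C', IsClubIn C' κ.ord ∧ C' ∉ quotClub κ.ord D C := by
  obtain ⟨C', hC', hnot⟩ := hB _ (isNormalBelow_clubEnum hreg hC)
  exact ⟨C', hC', fun h => hnot ((mem_quotClub_iff hreg hC).1 h).2⟩

lemma exists_club_biUnion_Ico_notMem_of_exists_club_notMem_quotClub
    (hq : ∀ C, IsClubIn C κ.ord → ∃ C', IsClubIn C' κ.ord ∧ C' ∉ quotClub κ.ord D C)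
    {δ : Ordinal → Ordinal} (hδ : IsNormalBelow κ.ord δ) :
    ∃ C', IsClubIn C' κ.ord ∧ (⋃ ξ ∈ C', Ico (δ ξ) (δ (ξ + 1))) ∉ D := by
  have hl := isSuccLimit_ord hreg.aleph0_le
  set C := δ '' (Iio κ.ord \ Iio 1)
  have hC : IsClubIn C κ.ord :=
    hδ.isClubIn_image ((isClubIn_Iio hl).sdiff_Iio (one_lt_of_isSuccLimit hl))
  have h0 : 0 ∉ C := fun ⟨ξ, ⟨hξ, hξ1⟩, h⟩ =>
    not_lt_zero (h ▸ hδ.strictMonoOn hl.bot_lt hξ ((not_lt.1 hξ1).trans_lt' zero_lt_one))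
  have heq : EqOn (clubEnum C κ.ord) δ (Iio κ.ord \ Iio 1) :=
    ((isNormalBelow_clubEnum hreg hC).strictMonoOn.mono sdiff_subset).eqOn_of_image_eq
      (hδ.strictMonoOn.mono sdiff_subset) (image_clubEnum_Iio_sdiff_Iio_one hreg hC h0)
  obtain ⟨C'', hC'', hnot⟩ := hq C hC
  rw [mem_quotClub_iff hreg hC, not_and] at hnot
  refine ⟨C'' \ Iio 1, hC''.sdiff_Iio (one_lt_of_isSuccLimit hl), hD.notMem_of_subset ?_
    (iUnion₂_subset fun ζ hζ x hx =>
      hx.2.trans (clubEnum_lt hreg hC (hl.add_one_lt (hC''.1 hζ)))) (hnot hC''.1)⟩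
  refine iUnion₂_mono' fun ξ ⟨hξ, hξ1⟩ => ⟨ξ, hξ, ?_⟩
  rw [heq ⟨hC''.1 hξ, hξ1⟩,
    heq ⟨hl.add_one_lt (hC''.1 hξ), (not_lt.2 le_add_self : ¬ ξ + 1 < 1)⟩]

end Equivalences

theorem stmt2_general (κ : Cardinal) (hreg : κ.IsRegular) (hunc : ℵ₀ < κ)
    (D : Set (Set Ordinal)) (hD : IsUltrafilterOn κ.ord D) :
    (WeaklyReasonable κ.ord D ↔
      (∀ δ : Ordinal → Ordinal, (∀ ξ, ξ < κ.ord → δ ξ < κ.ord) →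
        (∀ ξ ζ, ξ < ζ → ζ < κ.ord → δ ξ < δ ζ) →
        (∀ ξ, ξ < κ.ord → Order.IsSuccLimit ξ → δ ξ = sSup (δ '' Iio ξ)) →
        ∃ C', IsClubIn C' κ.ord ∧ (⋃ ξ ∈ C', Ico (δ ξ) (δ (ξ + 1))) ∉ D)) ∧
    ((∀ δ : Ordinal → Ordinal, (∀ ξ, ξ < κ.ord → δ ξ < κ.ord) →
        (∀ ξ ζ, ξ < ζ → ζ < κ.ord → δ ξ < δ ζ) →
        (∀ ξ, ξ < κ.ord → Order.IsSuccLimit ξ → δ ξ = sSup (δ '' Iio ξ)) →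
        ∃ C', IsClubIn C' κ.ord ∧ (⋃ ξ ∈ C', Ico (δ ξ) (δ (ξ + 1))) ∉ D) ↔
      (∀ C, IsClubIn C κ.ord →
        ∃ C', IsClubIn C' κ.ord ∧ C' ∉ quotClub κ.ord D C)) := by
  refine ⟨⟨fun hA δ h₁ h₂ h₃ => ?_, fun hB => ?_⟩, fun hB C hC => ?_, fun hq δ h₁ h₂ h₃ => ?_⟩
  · exact exists_club_biUnion_Ico_notMem_of_weaklyReasonable hreg hD hunc hA
      (isNormalBelow_iff.2 ⟨h₁, h₂, h₃⟩)
  · refine weaklyReasonable_of_exists_club_biUnion_Ico_notMem hreg hD fun δ hδ => ?_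
    obtain ⟨h₁, h₂, h₃⟩ := isNormalBelow_iff.1 hδ
    exact hB δ h₁ h₂ h₃
  · refine exists_club_notMem_quotClub_of_exists_club_biUnion_Ico_notMem hreg (fun δ hδ => ?_) hC
    obtain ⟨h₁, h₂, h₃⟩ := isNormalBelow_iff.1 hδ
    exact hB δ h₁ h₂ h₃
  · exact exists_club_biUnion_Ico_notMem_of_exists_club_notMem_quotClub hreg hD hq
      (isNormalBelow_iff.2 ⟨h₁, h₂, h₃⟩)

/-- Observation "easyob": for a uniform ultrafilter `D` on `λ` the following are
equivalent: (A) `D` is weakly reasonable; (B) for every increasing continuous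
`⟨δ_ξ : ξ < λ⟩ ⊆ λ` there is a club `C*` with `∪ {[δ_ξ, δ_{ξ+1}) : ξ ∈ C*} ∉ D`;
(C) for every club `C` of `λ`, some club of `λ` is not a member of `D/C`. -/
theorem stmt2 (κ : Cardinal) (hreg : κ.IsRegular) (hunc : ℵ₀ < κ)
    (D : Set (Set Ordinal)) (hD : IsUltrafilterOn κ.ord D)
    (hU : IsUniformOn κ.ord D) :
    (WeaklyReasonable κ.ord D ↔
      (∀ δ : Ordinal → Ordinal, (∀ ξ, ξ < κ.ord → δ ξ < κ.ord) →
        (∀ ξ ζ, ξ < ζ → ζ < κ.ord → δ ξ < δ ζ) →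
        (∀ ξ, ξ < κ.ord → Order.IsSuccLimit ξ → δ ξ = sSup (δ '' Iio ξ)) →
        ∃ C', IsClubIn C' κ.ord ∧ (⋃ ξ ∈ C', Ico (δ ξ) (δ (ξ + 1))) ∉ D)) ∧
    ((∀ δ : Ordinal → Ordinal, (∀ ξ, ξ < κ.ord → δ ξ < κ.ord) →
        (∀ ξ ζ, ξ < ζ → ζ < κ.ord → δ ξ < δ ζ) →
        (∀ ξ, ξ < κ.ord → Order.IsSuccLimit ξ → δ ξ = sSup (δ '' Iio ξ)) →
        ∃ C', IsClubIn C' κ.ord ∧ (⋃ ξ ∈ C', Ico (δ ξ) (δ (ξ + 1))) ∉ D) ↔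
      (∀ C, IsClubIn C κ.ord →
        ∃ C', IsClubIn C' κ.ord ∧ C' ∉ quotClub κ.ord D C)) :=
  stmt2_general κ hreg hunc D hD

end Sh830

end
end

section
/- Let λ be a regular uncountable cardinal and D a uniform ultrafilter on λ. If D is not weakly reasonable, then Odd has a winning strategy in the game ⅁_D. -/
open Set Ordinal Cardinal

noncomputable section

namespace Sh830

/-!
Let `f ∈ F_λ` witness that `D` is not weakly reasonable. Odd answers `α_{2i}` with
`α_{2i} + f(α_{2i}) + 1`. Even's moves form a club `C`, so `⋃_{δ ∈ C} [δ, δ + f δ) ∈ D`; but each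
of these intervals lies inside an interval `[α_{2i}, α_{2i+1})`, and these are disjoint from
Even's set `⋃_i [α_{2i+1}, α_{2i+2})`, which therefore is not in `D`.
-/

theorem IsUltraOn.not_disjoint {Z A B : Set Ordinal} {D : Set (Set Ordinal)}
    (hD : IsUltraOn Z D) (hA : A ∈ D) (hB : B ∈ D) : ¬ Disjoint A B := fun h =>
  hD.2.2.1 (h.inter_eq ▸ hD.2.2.2.2.1 A B hA hB)

section IsPlay

variable {l : Ordinal} {β γ : Ordinal → Ordinal}

theorem IsPlay.odd_lt_even (h : IsPlay l β γ) {i : Ordinal} (hi : i < l) :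
    ∀ j < i, γ j < β i := by
  induction i using WellFoundedLT.induction with
  | _ i IH =>
  intro j hji
  rcases zero_or_succ_or_isSuccLimit i with rfl | ⟨k, rfl⟩ | hlim
  · simp at hji
  · rw [Order.succ_eq_add_one] at hi hji ⊢
    have hk : k < l := (lt_add_one _).trans hi
    have hstep : γ k < β (k + 1) := h.2.2.1 k hi
    rcases (Order.lt_add_one_iff.mp hji).lt_or_eq with hjk | rfl
    · exact (IH k (lt_add_one _) hk j hjk).trans ((h.2.1 k hk).trans hstep)
    · exact hstep
  · have hj1 : j + 1 < i := hlim.add_one_lt hji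
    rw [h.2.2.2 i hi hlim]
    calc γ j < β (j + 1) := h.2.2.1 j (hj1.trans hi)
      _ < γ (j + 1) := h.2.1 _ (hj1.trans hi)
      _ ≤ sSup (γ '' Iio i) := le_csSup Ordinal.bddAbove_of_small ⟨j + 1, hj1, rfl⟩

theorem IsPlay.strictMonoOn_even (h : IsPlay l β γ) : StrictMonoOn β (Iio l) :=
  fun j hj _ hi hji => (h.2.1 j hj).trans (h.odd_lt_even hi j hji)

theorem IsPlay.strictMonoOn_odd (h : IsPlay l β γ) : StrictMonoOn γ (Iio l) :=
  fun j _ i hi hji => (h.odd_lt_even hi j hji).trans (h.2.1 i hi)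

theorem IsPlay.le_even (h : IsPlay l β γ) {i : Ordinal} (hi : i < l) : i ≤ β i := by
  induction i using WellFoundedLT.induction with
  | _ i IH =>
  by_contra! hlt
  exact (IH _ hlt (hlt.trans hi)).not_gt (h.strictMonoOn_even (hlt.trans hi) hi hlt)

theorem IsPlay.isClubIn_range (h : IsPlay l β γ) (hl : Order.IsSuccLimit l) :
    IsClubIn (β '' Iio l) l := by
  refine ⟨?_, fun δ hδ hδ0 hsup => ?_, fun α hα => ?_⟩
  · rintro _ ⟨i, hi, rfl⟩
    exact (h.1 i hi).1
  · -- `δ` is reached at the first index `i₀` where `β` is at least `δ`, which must be a limit.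
    set S := {i | i < l ∧ δ ≤ β i}
    have hS : S.Nonempty := ⟨δ, hδ, h.le_even hδ⟩
    set i₀ := sInf S
    obtain ⟨hi₀, hδi₀⟩ : i₀ ∈ S := csInf_mem hS
    have hbelow : ∀ j < i₀, β j < δ := fun j hj =>
      not_le.mp fun hle => notMem_of_lt_csInf hj (OrderBot.bddBelow S) ⟨hj.trans hi₀, hle⟩
    have hcof : ∀ b < δ, ∃ j < i₀, b < β j := by
      intro b hb
      obtain ⟨_, ⟨⟨j, hj, rfl⟩, hjδ⟩, hbj⟩ := exists_lt_of_lt_csSup' (hsup ▸ hb)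
      exact ⟨j, (h.strictMonoOn_even.lt_iff_lt hj hi₀).mp (hjδ.trans_le hδi₀), hbj⟩
    have hlim : Order.IsSuccLimit i₀ := by
      refine Ordinal.isSuccLimit_iff.mpr ⟨?_, Order.isSuccPrelimit_of_succ_lt fun j hj => ?_⟩
      · obtain ⟨j, hj, -⟩ := hcof 0 (pos_iff_ne_zero.mpr hδ0)
        exact (pos_of_gt hj).ne'
      · obtain ⟨j', hj', hjj'⟩ := hcof (β j) (hbelow j hj)
        exact (Order.succ_le_of_lt ((h.strictMonoOn_even.lt_iff_lt (hj.trans hi₀)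
          (hj'.trans hi₀)).mp hjj')).trans_lt hj'
    have hle : β i₀ ≤ δ := by
      rw [h.2.2.2 i₀ hi₀ hlim]
      refine csSup_le' ?_
      rintro _ ⟨j, hj, rfl⟩
      have hj1 : j + 1 < i₀ := hlim.add_one_lt hj
      exact ((h.2.2.1 j (hj1.trans hi₀)).trans (hbelow _ hj1)).le
    exact ⟨i₀, hi₀, hle.antisymm hδi₀⟩
  · have hα1 : α + 1 < l := hl.add_one_lt hα
    exact ⟨β (α + 1), ⟨α + 1, hα1, rfl⟩,
      (lt_add_one _).trans_le (h.le_even hα1)⟩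

theorem IsPlay.disjoint_Ico (h : IsPlay l β γ) {i j : Ordinal} (hi : i < l) (hj : j < l)
    (hj1 : j + 1 < l) : Disjoint (Ico (β i) (γ i)) (Ico (γ j) (β (j + 1))) := by
  rcases lt_or_ge j i with hji | hij
  · exact Ico_disjoint_Ico.mpr (min_le_right _ _ |>.trans
      ((h.strictMonoOn_even.monotoneOn hj1 hi (Order.add_one_le_of_lt hji)).trans
        (le_max_left _ _)))
  · exact Ico_disjoint_Ico.mpr (min_le_left _ _ |>.trans
      ((h.strictMonoOn_odd.monotoneOn hi hj hij).trans (le_max_right _ _)))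

end IsPlay

section jumpStrategy

variable {l : Ordinal} {f : Ordinal → Ordinal}

def jumpStrategy (f : Ordinal → Ordinal) : OddStr :=
  fun i b _ => b i le_rfl + f (b i le_rfl) + 1

theorem jumpStrategy_isOddStrategy (hl1 : 1 < l) (hl : IsPrincipal (· + ·) l)
    (hf : ∀ α < l, f α < l) : IsOddStrategy l (jumpStrategy f) := by
  intro i β γ hpos
  have hβ : β i < l := hpos.2.1 i le_rfl
  exact ⟨le_self_add.trans_lt (lt_add_one _),
    hl (hl hβ (hf _ hβ)) hl1⟩

theorem jumpStrategy_wins {D : Set (Set Ordinal)} {Z : Set Ordinal} (hD : IsUltraOn Z D)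
    (hl : Order.IsSuccLimit l)
    (hf : ∀ C, IsClubIn C l → (⋃ δ ∈ C, Ico δ (δ + f δ)) ∈ D) :
    OddWinsWith l D (jumpStrategy f) := by
  intro β γ hplay hfol hEven
  refine hD.not_disjoint hEven (hf _ (hplay.isClubIn_range hl)) ?_
  simp only [disjoint_iUnion₂_left, disjoint_iUnion₂_right, mem_Iio, mem_image]
  rintro _ ⟨i, hi, rfl⟩ j hj
  refine (hplay.disjoint_Ico hi hj (hl.add_one_lt hj)).symm.mono_right (Ico_subset_Ico_right ?_)
  rw [hfol i hi]
  exact le_self_add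

end jumpStrategy

theorem stmt4_general (κ : Cardinal) (hunc : ℵ₀ < κ)
    (D : Set (Set Ordinal)) (hD : IsUltrafilterOn κ.ord D)
    (hnwr : ¬ WeaklyReasonable κ.ord D) :
    ∃ st : OddStr, IsOddStrategy κ.ord st ∧ OddWinsWith κ.ord D st := by
  simp only [WeaklyReasonable, not_forall, not_exists, not_and, not_not] at hnwr
  obtain ⟨f, ⟨hf, -, -⟩, hfD⟩ := hnwr
  have hlim : Order.IsSuccLimit κ.ord := isSuccLimit_ord hunc.le
  exact ⟨jumpStrategy f,
    jumpStrategy_isOddStrategy (one_lt_of_isSuccLimit hlim) (isPrincipal_add_ord hunc.le) hf,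
    jumpStrategy_wins hD hlim hfD⟩

/-- Proposition 1.7(2): if `D` is not weakly reasonable, then Odd has a winning
strategy in the game `⅁_D`. -/
theorem stmt4 (κ : Cardinal) (hreg : κ.IsRegular) (hunc : ℵ₀ < κ)
    (D : Set (Set Ordinal)) (hD : IsUltrafilterOn κ.ord D)
    (hU : IsUniformOn κ.ord D)
    (hnwr : ¬ WeaklyReasonable κ.ord D) :
    ∃ st : OddStr, IsOddStrategy κ.ord st ∧ OddWinsWith κ.ord D st :=
  stmt4_general κ hunc D hD hnwr

end Sh830

end
end

section
/- Suppose λ is a regular uncountable cardinal, D is a weakly reasonable uniform ultrafilter on λ, and ⟨β_i : i < λ⟩ is an increasing continuous sequence of ordinals below λ. Then there is an increasing continuous sequence ⟨δ_ξ : ξ < λ⟩ of limit ordinals below λ such that ∪{[β_{δ_{2ξ+1}}, β_{δ_{2ξ+2}}) : ξ < λ} ∈ D. -/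
/-!
Weak reasonableness, applied to `f α = β (α + ω)`, gives a club `C` such that the union of the
intervals `[δ, δ + β (δ + ω))`, `δ ∈ C`, is not in `D`; since `δ ≤ β δ`, neither is the union
`V` of the intervals `[β (h ξ), β (h ξ + ω))` for any enumeration `h` of points of `C`.
Choose `h` normal with limit values in `C` and `h ξ + ω < h (ξ + 1)`, and let `δ` interleave
`δ (2ξ) = h ξ`, `δ (2ξ + 1) = h ξ + ω`; this is again normal. By continuity the intervals
`[β (h ξ), β (h (ξ + 1)))` cover `[β (h 0), λ)`, so `λ` is the union of the bounded (hence,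
by uniformity, null) set `β (h 0)`, of `V`, and of the union `X` of the intervals
`[β (h ξ + ω), β (h (ξ + 1)))`. As `D` is an ultrafilter, `X ∈ D`.
-/

open Set Ordinal Cardinal

noncomputable section

namespace Sh830

open Order

theorem le_apply_of_strictMonoOn_Iio {f : Ordinal → Ordinal} {l : Ordinal}
    (hf : StrictMonoOn f (Iio l)) {i : Ordinal} (hi : i < l) : i ≤ f i := by
  induction i using WellFoundedLT.induction with
  | _ i IH =>
    by_contra! hfi
    exact (IH (f i) hfi (hfi.trans hi)).not_gt (hf (hfi.trans hi) hi hfi)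

theorem add_le_apply_add {e : Ordinal → Ordinal} (he : StrictMono e) (a b : Ordinal) :
    e a + b ≤ e (a + b) := by
  have hle : ∀ c, e a ≤ e (a + c) := fun c => he.monotone le_self_add
  have hdiff : StrictMono fun c => e (a + c) - e a := fun c c' hcc' => by
    rw [← add_lt_add_iff_left (e a), Ordinal.add_sub_cancel_of_le (hle c),
      Ordinal.add_sub_cancel_of_le (hle c')]
    exact he (add_lt_add_right hcc' a)
  calc e a + b ≤ e a + (e (a + b) - e a) := add_le_add_right hdiff.le_apply _
    _ = e (a + b) := Ordinal.add_sub_cancel_of_le (hle b)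

theorem exists_eq_two_mul_or (ν : Ordinal) : ∃ ξ, ν = 2 * ξ ∨ ν = 2 * ξ + 1 := by
  refine ⟨ν / 2, ?_⟩
  have hmod : ν % 2 < succ 1 := by
    rw [succ_eq_add_one, one_add_one_eq_two]; exact Ordinal.mod_lt ν two_ne_zero
  rcases Order.le_one_iff.1 (lt_succ_iff.1 hmod) with h | h
  · left; conv_lhs => rw [← Ordinal.div_add_mod ν 2, h, add_zero]
  · right; conv_lhs => rw [← Ordinal.div_add_mod ν 2, h]

theorem isSuccLimit_of_two_mul {ξ : Ordinal} (h : IsSuccLimit (2 * ξ)) : IsSuccLimit ξ := by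
  refine Ordinal.isSuccLimit_iff.2 ⟨fun h0 => ?_, isSuccPrelimit_of_succ_lt fun a ha => ?_⟩
  · rw [h0, mul_zero] at h; exact not_isSuccLimit_zero h
  · have h2 : 2 * a + 1 + 1 < 2 * ξ :=
      h.succ_lt (h.succ_lt ((mul_lt_mul_iff_right₀ two_pos).2 ha))
    rw [add_assoc, one_add_one_eq_two, ← mul_add_one, mul_lt_mul_iff_right₀ two_pos] at h2
    rwa [succ_eq_add_one]

section Interleave

variable {h g : Ordinal → Ordinal}

def interleave (h g : Ordinal → Ordinal) (ν : Ordinal) : Ordinal :=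
  if ν % 2 = 0 then h (ν / 2) else g (ν / 2)

@[simp]
theorem interleave_two_mul (ξ : Ordinal) : interleave h g (2 * ξ) = h ξ := by
  simp [interleave, Ordinal.mul_div_cancel ξ two_ne_zero]

@[simp]
theorem interleave_two_mul_add_one (ξ : Ordinal) : interleave h g (2 * ξ + 1) = g ξ := by
  simp [interleave, Ordinal.mul_add_mod_self, Ordinal.mod_eq_of_lt one_lt_two,
    Ordinal.mul_add_div _ two_ne_zero, Ordinal.div_eq_zero_of_lt one_lt_two]

theorem isNormal_interleave (hh : IsNormal h) (hhg : ∀ ξ, h ξ < g ξ)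
    (hgh : ∀ ξ, g ξ < h (ξ + 1)) : IsNormal (interleave h g) := by
  refine IsNormal.of_succ_lt (fun ν => ?_) fun {ν} hν => ?_
  · obtain ⟨ξ, rfl | rfl⟩ := exists_eq_two_mul_or ν
    · simpa [succ_eq_add_one] using hhg ξ
    · rw [succ_eq_add_one, add_assoc, one_add_one_eq_two, ← mul_add_one]
      simpa using hgh ξ
  · obtain ⟨ξ, rfl | rfl⟩ := exists_eq_two_mul_or ν
    · have hξ := isSuccLimit_of_two_mul hν
      rw [interleave_two_mul]
      -- the even points `2 * ρ` are cofinal below `2 * ξ`, and odd ones are bounded by them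
      refine (isLUB_congr (Set.ext fun x => ⟨fun hx => ?_, fun hx => ?_⟩)).2
        (hh.isLUB_image_Iio_of_isSuccLimit hξ)
      · rintro _ ⟨ρ, hρ, rfl⟩
        simpa using hx (mem_image_of_mem _ (mem_Iio.2 ((mul_lt_mul_iff_right₀ two_pos).2 hρ)))
      · rintro _ ⟨μ, hμ, rfl⟩
        obtain ⟨ρ, rfl | rfl⟩ := exists_eq_two_mul_or μ
        · rw [interleave_two_mul]
          exact hx (mem_image_of_mem _ (mem_Iio.2 ((mul_lt_mul_iff_right₀ two_pos).1 hμ)))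
        · have hρ : ρ < ξ := (mul_lt_mul_iff_right₀ two_pos).1 ((lt_add_one _).trans hμ)
          rw [interleave_two_mul_add_one]
          exact (hgh ρ).le.trans (hx (mem_image_of_mem _ (hξ.succ_lt hρ)))
    · rw [← succ_eq_add_one] at hν
      exact absurd hν (not_isSuccLimit_succ _)

theorem interleave_forall_lt {p : Ordinal → Prop} {l : Ordinal} (hh : ∀ ξ < l, p (h ξ))
    (hg : ∀ ξ < l, p (g ξ)) : ∀ ν < l, p (interleave h g ν) := by
  intro ν hν
  obtain ⟨ξ, rfl | rfl⟩ := exists_eq_two_mul_or ν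
  · rw [interleave_two_mul]
    exact hh ξ ((Ordinal.le_mul_right ξ two_pos).trans_lt hν)
  · rw [interleave_two_mul_add_one]
    exact hg ξ ((Ordinal.le_mul_right ξ two_pos).trans_lt ((lt_add_one _).trans hν))

end Interleave

section Club

variable {C : Set Ordinal} {l : Ordinal}

theorem IsClubIn.sSup_mem_union_Ici (hC : IsClubIn C l) {t : Set Ordinal}
    (ht : t ⊆ C ∪ Ici l) (hne : t.Nonempty) (hbdd : BddAbove t) : sSup t ∈ C ∪ Ici l := by
  by_cases hmem : sSup t ∈ t
  · exact ht hmem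
  rcases lt_or_ge (sSup t) l with hl | hl
  · have hlt : ∀ x ∈ t, x < sSup t := fun x hx =>
      (le_csSup hbdd hx).lt_of_ne fun he => hmem (he ▸ hx)
    have htC : t ⊆ C ∩ Iio (sSup t) := fun x hx =>
      ⟨(ht hx).resolve_right fun hxl => (hlt x hx).not_ge (hl.trans_le hxl).le, hlt x hx⟩
    refine Or.inl (hC.2.1 _ hl (fun h0 => ?_) ?_)
    · obtain ⟨x, hx⟩ := hne
      simpa [h0] using hlt x hx
    · exact (csSup_le' fun _ hy => hy.2.le).antisymm
        (csSup_le_csSup ⟨_, fun _ hy => hy.2.le⟩ hne htC)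
  · exact Or.inr hl

theorem not_bddAbove_union_Ici (C : Set Ordinal) (l : Ordinal) : ¬ BddAbove (C ∪ Ici l) :=
  fun hb => not_bddAbove_Ici l (hb.mono subset_union_right)

/-- Adjoining `Ici l` makes the set unbounded without changing its elements below `l`. -/
theorem IsClubIn.isNormal_enumOrd (hC : IsClubIn C l) : IsNormal (enumOrd (C ∪ Ici l)) :=
  Ordinal.isNormal_enumOrd (fun _ ht hne hbdd => hC.sSup_mem_union_Ici ht hne hbdd)
    (not_bddAbove_union_Ici C l)

theorem IsClubIn.enumOrd_lt {κ : Cardinal} (hκ : κ.IsRegular) (hC : IsClubIn C κ.ord)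
    {ξ : Ordinal} (hξ : ξ < κ.ord) : enumOrd (C ∪ Ici κ.ord) ξ < κ.ord := by
  induction ξ using WellFoundedLT.induction with
  | _ ξ IH =>
    set e := enumOrd (C ∪ Ici κ.ord)
    have hsup : sSup (e '' Iio ξ) < κ.ord := by
      refine Ordinal.sSup_lt_of_lt_cof ?_ fun _ ⟨ρ, hρ, he⟩ => he ▸ IH ρ hρ (hρ.trans hξ)
      rw [← Ordinal.lift_cof, hκ.cof_ord]
      exact mk_image_le.trans_lt ((Cardinal.mk_Iio_ordinal ξ).trans_lt (lift_lt.2 (lt_ord.1 hξ)))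
    obtain ⟨c, hc, hsc⟩ := hC.2.2 _ hsup
    refine (enumOrd_le_of_forall_lt (Or.inl hc) fun ρ hρ => ?_).trans_lt (hC.1 hc)
    exact (le_csSup (Ordinal.bddAbove_of_small (s := e '' Iio ξ))
      (mem_image_of_mem e hρ)).trans_lt hsc

theorem IsClubIn.enumOrd_mem {κ : Cardinal} (hκ : κ.IsRegular) (hC : IsClubIn C κ.ord)
    {ξ : Ordinal} (hξ : ξ < κ.ord) : enumOrd (C ∪ Ici κ.ord) ξ ∈ C :=
  (Ordinal.enumOrd_mem (not_bddAbove_union_Ici C κ.ord) ξ).resolve_right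
    (hC.enumOrd_lt hκ hξ).not_ge

/-- Sampling the enumeration of `C` at the limits `ω * ω * (1 + ξ)` makes every value a limit
and leaves room for `h ξ + ω` strictly below `h (ξ + 1)`. -/
theorem IsClubIn.exists_isNormal {κ : Cardinal} (hκ : κ.IsRegular)
    (hunc : ℵ₀ < κ) (hC : IsClubIn C κ.ord) :
    ∃ h : Ordinal → Ordinal, IsNormal h ∧ (∀ ξ, IsSuccLimit (h ξ)) ∧
      (∀ ξ, h ξ + ω < h (ξ + 1)) ∧ ∀ ξ < κ.ord, h ξ ∈ C := by
  set e := enumOrd (C ∪ Ici κ.ord)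
  have he := hC.isNormal_enumOrd
  have hωω : IsSuccLimit (ω * ω) := isSuccLimit_mul_right omega0_pos isSuccLimit_omega0
  have hω : ω < κ.ord := omega0_lt_ord.2 hunc
  refine ⟨fun ξ => e (ω * ω * (1 + ξ)),
    (he.comp (isNormal_mul_right hωω.bot_lt)).comp (isNormal_add_right 1),
    fun ξ => he.map_isSuccLimit (isSuccLimit_mul_left hωω (by positivity)), fun ξ => ?_,
    fun ξ hξ => hC.enumOrd_mem hκ ?_⟩
  · calc e (ω * ω * (1 + ξ)) + ω < e (ω * ω * (1 + ξ)) + ω * ω := by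
          gcongr; exact lt_mul_of_one_lt_right omega0_pos one_lt_omega0
      _ ≤ e (ω * ω * (1 + ξ) + ω * ω) := add_le_apply_add he.strictMono _ _
      _ = e (ω * ω * (1 + (ξ + 1))) := by rw [← add_assoc, mul_add_one]
  · have hmul := isPrincipal_mul_ord hunc.le
    exact hmul (hmul hω hω) (isPrincipal_add_ord hunc.le (one_lt_omega0.trans hω) hξ)

end Club

theorem exists_le_lt_apply_succ {F : Ordinal → Ordinal} {l y : Ordinal}
    (hF : ∀ ξ < l, IsSuccLimit ξ → y < F ξ → ∃ ρ < ξ, y < F ρ) (h0 : F 0 ≤ y)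
    (hy : ∃ ξ < l, y < F ξ) : ∃ ξ < l, F ξ ≤ y ∧ y < F (ξ + 1) := by
  obtain ⟨ξ, ⟨hξl, hyξ⟩, hmin⟩ := wellFounded_lt.has_min {ξ | ξ < l ∧ y < F ξ} hy
  rcases Ordinal.zero_or_succ_or_isSuccLimit ξ with rfl | ⟨ρ, rfl⟩ | hlim
  · exact absurd h0 hyξ.not_ge
  · have hρl := (lt_succ ρ).trans hξl
    exact ⟨ρ, hρl, not_lt.1 fun h => hmin ρ ⟨hρl, h⟩ (lt_succ ρ), hyξ⟩
  · obtain ⟨ρ, hρ, hyρ⟩ := hF ξ hξl hlim hyξ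
    exact absurd hρ (hmin ρ ⟨hρ.trans hξl, hyρ⟩)

theorem IsUltraOn.mem_of_diff_diff_subset {Z : Set Ordinal} {D : Set (Set Ordinal)}
    (hD : IsUltraOn Z D) {A B X : Set Ordinal} (hA : A ∉ D) (hAZ : A ⊆ Z) (hB : B ∉ D)
    (hBZ : B ⊆ Z) (hXZ : X ⊆ Z) (hcover : (Z \ A) \ B ⊆ X) : X ∈ D := by
  obtain ⟨-, -, -, hup, hinter, hdich⟩ := hD
  refine hup _ X (hinter _ _ ((hdich A hAZ).resolve_left hA) ((hdich B hBZ).resolve_left hB))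
    (fun y ⟨hyA, hyB⟩ => hcover ⟨hyA, hyB.2⟩) hXZ

theorem IsUniformOn.Iio_notMem {κ : Cardinal} {D : Set (Set Ordinal)}
    (hU : IsUniformOn κ.ord D) {o : Ordinal} (ho : o < κ.ord) : Iio o ∉ D := fun hD => by
  have := hU _ hD
  rw [Cardinal.mk_Iio_ordinal, Cardinal.mk_Iio_ordinal, card_ord, Cardinal.lift_inj] at this
  exact (lt_ord.1 ho).ne this

theorem comp_add_omega0_mem_flam {κ : Cardinal} (hκ : ℵ₀ < κ) {β : Ordinal → Ordinal}
    (hlt : ∀ i, i < κ.ord → β i < κ.ord) (hβ : StrictMonoOn β (Iio κ.ord)) :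
    (fun α => β (α + ω)) ∈ Flam κ.ord := by
  have hω : ω < κ.ord := omega0_lt_ord.2 hκ
  have hadd := isPrincipal_add_ord hκ.le
  refine ⟨fun α hα => hlt _ (hadd hα hω), fun α α' hαα' hα' => ?_, fun γ hγ => ?_⟩
  · exact hβ.monotoneOn (hadd (hαα'.trans_lt hα') hω) (hadd hα' hω) (add_le_add_left hαα' ω)
  · exact ⟨γ, hγ, le_self_add.trans (le_apply_of_strictMonoOn_Iio hβ (hadd hγ hω))⟩

theorem iUnion_Ico_add_omega0_notMem {κ : Cardinal} (hκ : ℵ₀ < κ) {D : Set (Set Ordinal)}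
    (hD : IsUltrafilterOn κ.ord D) {β : Ordinal → Ordinal}
    (hlt : ∀ i, i < κ.ord → β i < κ.ord) (hβ : StrictMonoOn β (Iio κ.ord))
    {C : Set Ordinal} (hC : C ⊆ Iio κ.ord) (hA : (⋃ δ ∈ C, Ico δ (δ + β (δ + ω))) ∉ D)
    {h : Ordinal → Ordinal} (hhC : ∀ ξ < κ.ord, h ξ ∈ C) :
    (⋃ ξ ∈ Iio κ.ord, Ico (β (h ξ)) (β (h ξ + ω))) ∉ D := fun hVD => by
  have hadd := isPrincipal_add_ord hκ.le
  have hω : ω < κ.ord := omega0_lt_ord.2 hκ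
  refine hA (hD.2.2.2.1 _ _ hVD ?_ ?_) <;> simp only [iUnion_subset_iff]
  · exact fun ξ hξ y hy => mem_biUnion (hhC ξ hξ)
      ⟨(le_apply_of_strictMonoOn_Iio hβ (hC (hhC ξ hξ))).trans hy.1, hy.2.trans_le le_add_self⟩
  · exact fun δ hδ y hy => hy.2.trans (hadd (hC hδ) (hlt _ (hadd (hC hδ) hω)))

theorem iUnion_Ico_mem_of_iUnion_Ico_notMem {κ : Cardinal} (hκ : ℵ₀ ≤ κ)
    {D : Set (Set Ordinal)} (hD : IsUltrafilterOn κ.ord D) (hU : IsUniformOn κ.ord D)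
    {β h g : Ordinal → Ordinal} (hlt : ∀ i, i < κ.ord → β i < κ.ord)
    (hβ : StrictMonoOn β (Iio κ.ord))
    (hcont : ∀ i, i < κ.ord → IsSuccLimit i → β i = sSup (β '' Iio i))
    (hh : IsNormal h) (hhlim : ∀ ξ, IsSuccLimit (h ξ)) (hhl : ∀ ξ < κ.ord, h ξ < κ.ord)
    (hgl : ∀ ξ < κ.ord, g ξ < κ.ord) (hV : (⋃ ξ ∈ Iio κ.ord, Ico (β (h ξ)) (β (g ξ))) ∉ D) :
    (⋃ ξ ∈ Iio κ.ord, Ico (β (g ξ)) (β (h (ξ + 1)))) ∈ D := by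
  have hl : IsSuccLimit κ.ord := isSuccLimit_ord hκ
  have hβh : ∀ y, ∀ ξ < κ.ord, IsSuccLimit ξ → y < β (h ξ) → ∃ ρ < ξ, y < β (h ρ) := by
    intro y ξ hξ hlim hy
    rw [hcont _ (hhl ξ hξ) (hhlim ξ)] at hy
    obtain ⟨_, ⟨i, hi, rfl⟩, hyi⟩ :=
      exists_lt_of_lt_csSup ⟨_, mem_image_of_mem β (mem_Iio.2 (hhlim ξ).bot_lt)⟩ hy
    obtain ⟨ρ, hρ, hiρ⟩ := (hh.lt_iff_exists_lt hlim).1 hi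
    exact ⟨ρ, hρ, hyi.trans (hβ (hi.trans (hhl ξ hξ)) (hhl ρ (hρ.trans hξ)) hiρ)⟩
  refine hD.mem_of_diff_diff_subset (hU.Iio_notMem (hlt _ (hhl 0 hl.bot_lt)))
    (fun y hy => hy.trans (hlt _ (hhl 0 hl.bot_lt))) hV ?_ ?_ ?_
  · simp only [iUnion_subset_iff]
    exact fun ξ hξ y hy => hy.2.trans (hlt _ (hgl ξ hξ))
  · simp only [iUnion_subset_iff]
    exact fun ξ hξ y hy => hy.2.trans (hlt _ (hhl _ (hl.succ_lt hξ)))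
  · rintro y ⟨⟨hy, hy0⟩, hyV⟩
    have hy1 : y + 1 < κ.ord := hl.succ_lt hy
    obtain ⟨ξ, hξ, hξy, hyξ⟩ := exists_le_lt_apply_succ (F := β ∘ h) (hβh y) (not_lt.1 hy0)
      ⟨y + 1, hy1, (lt_add_one y).trans_le
        (hh.strictMono.le_apply.trans (le_apply_of_strictMonoOn_Iio hβ (hhl _ hy1)))⟩
    simp only [mem_iUnion] at hyV ⊢
    exact ⟨ξ, hξ, not_lt.1 fun hyg => hyV ⟨ξ, hξ, hξy, hyg⟩, hyξ⟩

/-- Lemma 1.7Q: if `D` is a weakly reasonable uniform ultrafilter on `λ` and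
`⟨β_i : i < λ⟩` is increasing continuous below `λ`, then there is an increasing
continuous sequence `⟨δ_ξ : ξ < λ⟩` of limit ordinals with
`∪ {[β_{δ_{2ξ+1}}, β_{δ_{2ξ+2}}) : ξ < λ} ∈ D`. -/
theorem stmt5 (κ : Cardinal) (hreg : κ.IsRegular) (hunc : ℵ₀ < κ)
    (D : Set (Set Ordinal)) (hD : IsUltrafilterOn κ.ord D)
    (hU : IsUniformOn κ.ord D) (hwr : WeaklyReasonable κ.ord D)
    (β : Ordinal → Ordinal)
    (hlt : ∀ i, i < κ.ord → β i < κ.ord)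
    (hmono : ∀ i j, i < j → j < κ.ord → β i < β j)
    (hcont : ∀ i, i < κ.ord → Order.IsSuccLimit i → β i = sSup (β '' Iio i)) :
    ∃ δ : Ordinal → Ordinal,
      (∀ ξ, ξ < κ.ord → δ ξ < κ.ord ∧ Order.IsSuccLimit (δ ξ)) ∧
      (∀ ξ ζ, ξ < ζ → ζ < κ.ord → δ ξ < δ ζ) ∧
      (∀ ξ, ξ < κ.ord → Order.IsSuccLimit ξ → δ ξ = sSup (δ '' Iio ξ)) ∧
      (⋃ ξ ∈ Iio κ.ord, Ico (β (δ (2 * ξ + 1))) (β (δ (2 * ξ + 2)))) ∈ D := by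
  have hβ : StrictMonoOn β (Iio κ.ord) := fun i _ j hj hij => hmono i j hij hj
  obtain ⟨C, hC, hA⟩ := hwr _ (comp_add_omega0_mem_flam hunc hlt hβ)
  obtain ⟨h, hh, hhlim, hgap, hhC⟩ := hC.exists_isNormal hreg hunc
  have hhl : ∀ ξ < κ.ord, h ξ < κ.ord := fun ξ hξ => hC.1 (hhC ξ hξ)
  have hgl : ∀ ξ < κ.ord, h ξ + ω < κ.ord := fun ξ hξ =>
    isPrincipal_add_ord hunc.le (hhl ξ hξ) (omega0_lt_ord.2 hunc)
  have hd := isNormal_interleave hh (fun ξ => lt_add_of_pos_right _ omega0_pos) hgap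
  have heven : ∀ ξ, interleave h (h · + ω) (2 * ξ + 2) = h (ξ + 1) := fun ξ => by
    rw [← mul_add_one, interleave_two_mul]
  refine ⟨interleave h (h · + ω),
    interleave_forall_lt (p := fun x => x < κ.ord ∧ IsSuccLimit x) (fun ξ hξ => ⟨hhl ξ hξ, hhlim ξ⟩)
      (fun ξ hξ => ⟨hgl ξ hξ, isSuccLimit_add _ isSuccLimit_omega0⟩),
    fun _ _ hνμ _ => hd.strictMono hνμ,
    fun ν _ hν => ((hd.isLUB_image_Iio_of_isSuccLimit hν).csSup_eq
      ⟨_, mem_image_of_mem _ (mem_Iio.2 hν.bot_lt)⟩).symm, ?_⟩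
  simp only [interleave_two_mul_add_one, heven]
  exact iUnion_Ico_mem_of_iUnion_Ico_notMem hunc.le hD hU hlt hβ hcont hh hhlim hhl hgl
    (iUnion_Ico_add_omega0_notMem hunc hD hlt hβ hC.1 hA hhC)

end Sh830

end
end

section
/- Let λ be a regular uncountable cardinal. The forcing notion Q¹_λ is (<λ)-complete: if δ < λ is a limit ordinal and ⟨p_i : i < δ⟩ is a sequence of conditions in Q¹_λ which is increasing with respect to ≤_{Q¹_λ}, then there is a condition p ∈ Q¹_λ with p_i ≤_{Q¹_λ} p for all i < δ. -/
open Set Ordinal Cardinal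

noncomputable section

namespace Sh830

/-!
The intersection `C` of the clubs `C^{p_i}` is again a club, since fewer than `λ` clubs are
intersected and `λ` is regular and uncountable; likewise `sup γ^{p_i} < λ`. Fix a block
`[a, b)` of `C`. For each `i`, the sets that are `d^{p_i}_ζ`-large on every `p_i`-block inside
`[a, b)` form a proper filter, and these filters grow with `i` because each ultrafilter of a
stronger condition concentrates on some block of a weaker one. Any ultrafilter on `[a, b)`
extending their union is a legitimate `d^q_a`: a set it contains cannot be small on every
`p_i`-block, as then its complement would belong to the `i`-th filter.
-/

theorem iSup_Iio_lt_ord {κ : Cardinal} (hκ : κ.IsRegular) {δ : Ordinal} (hδ : δ < κ.ord)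
    {f : Ordinal → Ordinal} (hf : ∀ i < δ, f i < κ.ord) : ⨆ i : Iio δ, f i < κ.ord := by
  apply Ordinal.lift_iSup_lt_of_lt_cof
  · rwa [← lift_cof, hκ.cof_ord, Cardinal.mk_Iio_ordinal, Cardinal.lift_lift, Cardinal.lift_lt,
      ← lt_ord]
  · exact fun i ↦ hf i.1 i.2

theorem sSup_inter_Iio_eq_self_iff {C : Set Ordinal} {x : Ordinal} :
    sSup (C ∩ Iio x) = x ↔ ∀ y < x, ∃ c ∈ C, y < c ∧ c < x := by
  have hbdd : BddAbove (C ∩ Iio x) := ⟨x, fun _ h ↦ h.2.le⟩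
  constructor
  · intro h y hy
    rw [← h, lt_csSup_iff' hbdd] at hy
    obtain ⟨c, ⟨hcC, hcx⟩, hyc⟩ := hy
    exact ⟨c, hcC, hyc, hcx⟩
  · intro h
    refine le_antisymm (csSup_le' fun _ h ↦ h.2.le) (le_of_forall_lt fun y hy ↦ ?_)
    obtain ⟨c, hcC, hyc, hcx⟩ := h y hy
    exact (lt_csSup_iff' hbdd).2 ⟨c, ⟨hcC, hcx⟩, hyc⟩

theorem nxt_le_of_mem {C : Set Ordinal} {x c : Ordinal} (hc : c ∈ C) (hxc : x < c) :
    nxt C x ≤ c :=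
  csInf_le' ⟨hc, hxc⟩

theorem IsClubIn.nxt_mem_inter_Ioi {C : Set Ordinal} {l x : Ordinal} (hC : IsClubIn C l)
    (hx : x < l) : nxt C x ∈ C ∩ Ioi x :=
  csInf_mem (hC.2.2 x hx)

theorem exists_gt_mem_iInter_of_isClubIn {κ : Cardinal} (hκ : κ.IsRegular) (hκ₀ : ℵ₀ < κ)
    {δ : Ordinal} (hδ : δ < κ.ord) (hδ₀ : δ ≠ 0) {C : Ordinal → Set Ordinal}
    (hC : ∀ i < δ, IsClubIn (C i) κ.ord) {α : Ordinal} (hα : α < κ.ord) :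
    ∃ β ∈ ⋂ i < δ, C i, α < β := by
  -- `g x` bounds the next point of every `C i` above `x`, so each `C i` is cofinal in the
  -- supremum `nfp g α` of the iterates `g^[n] α`.
  set g : Ordinal → Ordinal := fun x ↦ ⨆ i : Iio δ, nxt (C i) x
  have hnxt_le : ∀ i < δ, ∀ x, nxt (C i) x ≤ g x := fun i hi x ↦
    Ordinal.le_iSup (fun j : Iio δ ↦ nxt (C j) x) ⟨i, hi⟩
  have hg_lt : ∀ x < κ.ord, g x < κ.ord := fun x hx ↦
    iSup_Iio_lt_ord hκ hδ fun i hi ↦ (hC i hi).1 ((hC i hi).nxt_mem_inter_Ioi hx).1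
  have hlt_g : ∀ x < κ.ord, x < g x := fun x hx ↦
    ((hC 0 hδ₀.bot_lt).nxt_mem_inter_Ioi hx).2.trans_le (hnxt_le 0 hδ₀.bot_lt x)
  have hiter_lt : ∀ n, g^[n] α < κ.ord := by
    intro n
    induction n with
    | zero => exact hα
    | succ n ih => rw [Function.iterate_succ_apply']; exact hg_lt _ ih
  have hiter_lt_nfp : ∀ n, g^[n] α < nfp g α := fun n ↦ by
    calc g^[n] α < g^[n + 1] α := by
          rw [Function.iterate_succ_apply']; exact hlt_g _ (hiter_lt n)
      _ ≤ nfp g α := iterate_le_nfp g α (n + 1)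
  refine ⟨nfp g α, mem_iInter₂.2 fun i hi ↦ ?_, hiter_lt_nfp 0⟩
  refine (hC i hi).2.1 _ (nfp_lt_ord_of_isRegular hκ hκ₀.ne' hg_lt hα)
    (hiter_lt_nfp 0).ne_bot (sSup_inter_Iio_eq_self_iff.2 fun y hy ↦ ?_)
  obtain ⟨n, hyn⟩ := lt_nfp_iff.1 hy
  have hmem := (hC i hi).nxt_mem_inter_Ioi (hiter_lt n)
  refine ⟨_, hmem.1, hyn.trans hmem.2, (hnxt_le i hi _).trans_lt ?_⟩
  rw [← Function.iterate_succ_apply' g]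
  exact hiter_lt_nfp (n + 1)

theorem isClubIn_iInter {κ : Cardinal} (hκ : κ.IsRegular) (hκ₀ : ℵ₀ < κ)
    {δ : Ordinal} (hδ : δ < κ.ord) (hδ₀ : δ ≠ 0) {C : Ordinal → Set Ordinal}
    (hC : ∀ i < δ, IsClubIn (C i) κ.ord) : IsClubIn (⋂ i < δ, C i) κ.ord := by
  refine ⟨fun x hx ↦ (hC 0 hδ₀.bot_lt).1 (mem_iInter₂.1 hx 0 hδ₀.bot_lt), ?_,
    fun α hα ↦ exists_gt_mem_iInter_of_isClubIn hκ hκ₀ hδ hδ₀ hC hα⟩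
  intro x hx hx₀ hsup
  refine mem_iInter₂.2 fun i hi ↦ (hC i hi).2.1 x hx hx₀ (sSup_inter_Iio_eq_self_iff.2 ?_)
  intro y hy
  obtain ⟨c, hc, hyc, hcx⟩ := sSup_inter_Iio_eq_self_iff.1 hsup y hy
  exact ⟨c, mem_iInter₂.1 hc i hi, hyc, hcx⟩

namespace IsUltraOn

variable {Z : Set Ordinal} {D : Set (Set Ordinal)}

theorem nonempty_of_mem (hD : IsUltraOn Z D) {A : Set Ordinal} (hA : A ∈ D) : A.Nonempty :=
  nonempty_iff_ne_empty.2 fun h ↦ hD.2.2.1 (h ▸ hA)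

theorem inter_mem_of_subset (hD : IsUltraOn Z D) {A B : Set Ordinal} (hA : A ∩ Z ∈ D)
    (hAB : A ⊆ B) : B ∩ Z ∈ D :=
  hD.2.2.2.1 _ _ hA (inter_subset_inter_left Z hAB) inter_subset_right

theorem inter_mem_inter (hD : IsUltraOn Z D) {A B : Set Ordinal} (hA : A ∩ Z ∈ D)
    (hB : B ∩ Z ∈ D) : A ∩ B ∩ Z ∈ D := by
  rw [inter_inter_distrib_right]
  exact hD.2.2.2.2.1 _ _ hA hB

theorem diff_mem_of_inter_notMem (hD : IsUltraOn Z D) {A : Set Ordinal} (hA : A ∩ Z ∉ D) :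
    Z \ A ∈ D := by
  simpa only [sdiff_inter_self_eq_sdiff] using
    (hD.2.2.2.2.2 (A ∩ Z) inter_subset_right).resolve_left hA

end IsUltraOn

theorem isUltraOn_of_mem_ultrafilter {Z : Set Ordinal} {u : Ultrafilter Ordinal} (hZ : Z ∈ u) :
    IsUltraOn Z {A | A ⊆ Z ∧ A ∈ u} := by
  refine ⟨fun A hA ↦ hA.1, ⟨subset_rfl, hZ⟩, fun h ↦ u.empty_notMem h.2,
    fun A B hA hAB hBZ ↦ ⟨hBZ, Filter.mem_of_superset hA.2 hAB⟩,
    fun A B hA hB ↦ ⟨inter_subset_left.trans hA.1, Filter.inter_mem hA.2 hB.2⟩, fun A hAZ ↦ ?_⟩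
  by_cases hA : A ∈ u
  · exact .inl ⟨hAZ, hA⟩
  · exact .inr ⟨sdiff_subset,
      sdiff_eq Z A ▸ Filter.inter_mem hZ (Ultrafilter.compl_mem_iff_notMem.2 hA)⟩

namespace Q1

variable {l : Ordinal}

def blockFilter (p : Q1 l) (a b : Ordinal) : Filter Ordinal where
  sets := {B | ∀ ζ ∈ p.C ∩ Ico a b, B ∩ Ico ζ (nxt p.C ζ) ∈ p.d ζ}
  univ_sets ζ hζ := by simpa only [univ_inter] using (p.ultra ζ hζ.1).2.1
  sets_of_superset hB hBB' ζ hζ := (p.ultra ζ hζ.1).inter_mem_of_subset (hB ζ hζ) hBB'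
  inter_sets hB hB' ζ hζ := (p.ultra ζ hζ.1).inter_mem_inter (hB ζ hζ) (hB' ζ hζ)

variable {p q : Q1 l} {a b : Ordinal}

theorem Ico_mem_blockFilter (hb : b ∈ p.C) : Ico a b ∈ p.blockFilter a b := by
  intro ζ hζ
  rw [inter_eq_right.2 (Ico_subset_Ico hζ.2.1 (nxt_le_of_mem hb hζ.2.2))]
  exact (p.ultra ζ hζ.1).2.1

theorem compl_mem_blockFilter {A : Set Ordinal}
    (hA : ∀ ζ ∈ p.C ∩ Ico a b, A ∩ Ico ζ (nxt p.C ζ) ∉ p.d ζ) : Aᶜ ∈ p.blockFilter a b :=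
  fun ζ hζ ↦ by
    simpa only [inter_comm, sdiff_eq] using (p.ultra ζ hζ.1).diff_mem_of_inter_notMem (hA ζ hζ)

theorem blockFilter_neBot (ha : a ∈ p.C) (hab : a < b) : (p.blockFilter a b).NeBot :=
  Filter.forall_mem_nonempty_iff_neBot.1 fun _ hB ↦
    ((p.ultra a ha).nonempty_of_mem (hB a ⟨ha, le_rfl, hab⟩)).mono inter_subset_left

theorem blockFilter_le_of_le (hpq : Q1le l p q) (hb : b ∈ q.C) :
    q.blockFilter a b ≤ p.blockFilter a b := by
  intro B hB ζ' hζ'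
  -- Otherwise the complement of `B` is large on the `q`-block at `ζ'`, hence, by `Q1le`, on
  -- some `p`-block inside it, where `B` is large too.
  by_contra hB'
  obtain ⟨ζ, ⟨hζC, hζ'ζ, hζnxt⟩, hζd⟩ :=
    hpq.2.2.2 ζ' hζ'.1 _ ((q.ultra ζ' hζ'.1).diff_mem_of_inter_notMem hB')
  have hζab : ζ ∈ p.C ∩ Ico a b :=
    ⟨hζC, hζ'.2.1.trans hζ'ζ, hζnxt.trans_le (nxt_le_of_mem hb hζ'.2.2)⟩
  obtain ⟨x, ⟨⟨-, hxB⟩, hxB'⟩, -⟩ :=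
    (p.ultra ζ hζC).nonempty_of_mem ((p.ultra ζ hζC).inter_mem_inter hζd (hB ζ hζab))
  exact hxB hxB'

end Q1

theorem exists_isUltraOn_refining_chain {l δ : Ordinal} (hδ₀ : δ ≠ 0) {p : Ordinal → Q1 l}
    (hp : ∀ i j, i < j → j < δ → Q1le l (p i) (p j)) {a b : Ordinal}
    (ha : ∀ i < δ, a ∈ (p i).C) (hb : ∀ i < δ, b ∈ (p i).C) (hab : a < b) :
    ∃ D, IsUltraOn (Ico a b) D ∧ ∀ i < δ, ∀ A ∈ D,
      ∃ ζ ∈ (p i).C ∩ Ico a b, A ∩ Ico ζ (nxt (p i).C ζ) ∈ (p i).d ζ := by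
  have : Nonempty (Iio δ) := ⟨⟨0, hδ₀.bot_lt⟩⟩
  have hdir : Directed (· ≥ ·) fun i : Iio δ ↦ (p i).blockFilter a b := by
    refine directed_of_isDirected_le fun i j hij ↦ ?_
    rcases hij.eq_or_lt with rfl | hij
    · exact le_rfl
    · exact Q1.blockFilter_le_of_le (hp i j hij j.2) (hb j j.2)
  have : (⨅ i : Iio δ, (p i).blockFilter a b).NeBot :=
    Filter.iInf_neBot_of_directed' hdir fun i ↦ Q1.blockFilter_neBot (ha i i.2) hab
  set u := Ultrafilter.of (⨅ i : Iio δ, (p i).blockFilter a b)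
  have hu : ∀ i < δ, ∀ B ∈ (p i).blockFilter a b, B ∈ u := fun i hi B hB ↦
    Ultrafilter.of_le _ (Filter.mem_iInf_of_mem (⟨i, hi⟩ : Iio δ) hB)
  have hIco : Ico a b ∈ u := hu 0 hδ₀.bot_lt _ (Q1.Ico_mem_blockFilter (hb 0 hδ₀.bot_lt))
  refine ⟨_, isUltraOn_of_mem_ultrafilter hIco, fun i hi A hA ↦ ?_⟩
  by_contra! hAi
  exact Ultrafilter.compl_mem_iff_notMem.1 (hu i hi _ (Q1.compl_mem_blockFilter hAi)) hA.2

/-- Proposition 1.2(3): `Q¹_λ` is `(<λ)`-complete. -/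
theorem stmt8 (κ : Cardinal) (hreg : κ.IsRegular) (hunc : ℵ₀ < κ)
    (δ : Ordinal) (hδ : δ < κ.ord) (hlim : Order.IsSuccLimit δ)
    (p : Ordinal → Q1 κ.ord)
    (hinc : ∀ i j, i < j → j < δ → Q1le κ.ord (p i) (p j)) :
    ∃ q : Q1 κ.ord, ∀ i, i < δ → Q1le κ.ord (p i) q := by
  have hδ₀ : δ ≠ 0 := hlim.ne_bot
  have hC : IsClubIn (⋂ i < δ, (p i).C) κ.ord :=
    isClubIn_iInter hreg hunc hδ hδ₀ fun i _ ↦ (p i).club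
  choose! d hd_ultra hd_refines using fun a (ha : a ∈ ⋂ i < δ, (p i).C) ↦
    have hb := hC.nxt_mem_inter_Ioi (hC.1 ha)
    exists_isUltraOn_refining_chain hδ₀ hinc (mem_iInter₂.1 ha) (mem_iInter₂.1 hb.1) hb.2
  refine ⟨⟨⨆ i : Iio δ, (p i).γ, ⋂ i < δ, (p i).C, d,
    iSup_Iio_lt_ord hreg hδ fun i _ ↦ (p i).γ_lt, hC,
    fun a ha ↦ (p 0).lim a (mem_iInter₂.1 ha 0 hδ₀.bot_lt), hd_ultra⟩, fun i hi ↦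
    ⟨Ordinal.le_iSup (fun j : Iio δ ↦ (p j).γ) ⟨i, hi⟩, fun x hx ↦ mem_iInter₂.2 fun j hj ↦ ?_,
      biInter_subset_of_mem hi, fun a ha ↦ hd_refines a ha i hi⟩⟩
  rcases lt_trichotomy i j with hij | rfl | hji
  · exact (hinc i j hij hj).2.1 hx
  · exact hx.1
  · exact (hinc j i hji hi).2.2.1 hx.1

end Sh830

end
end
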